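/- arXiv:1302.3716 — 7 statements merged into one kernel-verified Lean document; each statement's English description precedes it below -/
import Mathlib

section
/- Let m ≥ 1 and n ≥ 0 be integers. For s ∈ {0,…,n} let I_s denote the m×(m+n) complex matrix whose (i,j) entry is 1 if j = i + s and 0 otherwise. Then for every m×(m+n) complex matrix A, the eigenvalue locus E_A = { (x_0,…,x_n) ∈ ℂ^{n+1} : rank(A − Σ_{s=0}^n x_s I_s) < m } is a finite set with at most binomial(m+n, n+1) elements. -/
/-!
Let `I ⊆ ℂ[x₀, …, xₙ]` be the ideal of polynomials vanishing on `E_A`. Every maximal minor of the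
polynomial matrix `A - ∑ xₛ Iₛ` lies in `I`. Given a monomial `x^γ` of degree `m`, list its
exponents as `d₀ ≤ ⋯ ≤ d_{m-1}` and take the minor on the columns `dᵢ + i`: up to terms of degree
`< m` it is `± x^γ` plus monomials of degree `m` with strictly larger weight `∑ s² γₛ` (by the
strict rearrangement inequality). Downward induction on this weight shows that every monomial of
degree `m`, hence every polynomial, is congruent modulo `I` to one of degree `≤ m - 1`. Evaluation
on a finite `S ⊆ E_A` is onto `ℂ^S` and kills `I`, so `|S|` is at most the dimension
`binom(m + n, n + 1)` of the polynomials of degree `≤ m - 1`.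
-/

/-- The `s`-th unit matrix: the `m × (m+n)` matrix whose `(i,j)` entry is `1`
if `j = i + s` and `0` otherwise (with `0`-based indices). -/
def unitMatrix (m n : ℕ) (s : Fin (n + 1)) : Matrix (Fin m) (Fin (m + n)) ℂ :=
  Matrix.of fun i j => if (j : ℕ) = (i : ℕ) + (s : ℕ) then 1 else 0

/-- The eigenvalue locus of an `m × (m+n)` complex matrix `A`: the set of tuples
`(x_0,…,x_n) ∈ ℂ^{n+1}` such that `A - ∑ x_s I_s` has rank `< m`. -/
def eigLocus (m n : ℕ) (A : Matrix (Fin m) (Fin (m + n)) ℂ) : Set (Fin (n + 1) → ℂ) :=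
  {x | (A - ∑ s : Fin (n + 1), x s • unitMatrix m n s).rank < m}

open MvPolynomial

theorem Set.finite_and_ncard_le_of_forall_finset_card_le {α : Type*} {s : Set α} {N : ℕ}
    (h : ∀ t : Finset α, ↑t ⊆ s → t.card ≤ N) : s.Finite ∧ s.ncard ≤ N := by
  have hs : s.Finite := by
    by_contra hinf
    obtain ⟨t, hts, hcard⟩ := Set.Infinite.exists_subset_card_eq hinf (N + 1)
    have := h t hts
    omega
  refine ⟨hs, ?_⟩
  rw [Set.ncard_eq_toFinset_card _ hs]
  exact h _ (by simp)

theorem Finsupp.exists_monotone_sum_single_eq {ι : Type*} [LinearOrder ι] (γ : ι →₀ ℕ) {k : ℕ}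
    (hk : γ.degree = k) : ∃ d : Fin k → ι, Monotone d ∧ ∑ i, single (d i) 1 = γ := by
  set l := (toMultiset γ).sort (· ≤ ·)
  have hl : l.length = k := by
    rw [Multiset.length_sort, card_toMultiset, ← hk]
    rfl
  refine ⟨fun i => l.get (i.cast hl.symm), fun i j hij => ?_, ?_⟩
  · exact (Multiset.pairwise_sort _ _).rel_get_of_le (by simpa using hij)
  · conv_rhs => rw [← toMultiset_toFinsupp γ]
    simp_rw [← Multiset.toFinsupp_singleton, ← map_sum]
    congr 1
    calc ∑ i : Fin k, {l.get (i.cast hl.symm)}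
        = ((Finset.univ.val.map fun i : Fin k => l.get (i.cast hl.symm)).map ({·})).sum := by
          rw [Multiset.map_map]; rfl
      _ = ↑(List.ofFn fun i : Fin k => l.get (i.cast hl.symm)) := by
          rw [Multiset.sum_map_singleton, Fin.univ_val_map]
      _ = toMultiset γ := by rw [← List.ofFn_congr hl l.get, List.ofFn_get, Multiset.sort_eq]

theorem Equiv.Perm.eq_one_of_strictMono {α : Type*} [LinearOrder α] [WellFoundedLT α]
    {τ : Equiv.Perm α} (hτ : StrictMono τ) : τ = 1 := by
  ext1 i
  exact congrFun ((hτ.range_inj strictMono_id).mp (by simp)) i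

theorem sum_sq_sub_lt_sum_sq_sub_perm {k : ℕ} {c : Fin k → ℤ} (hc : StrictMono c)
    {τ : Equiv.Perm (Fin k)} (hτ : τ ≠ 1) :
    ∑ i, (c i - i) ^ 2 < ∑ i, (c i - τ i) ^ 2 := by
  have hmono : Monovary c fun i : Fin k => (i : ℤ) := fun i j hij =>
    hc.monotone (by simpa using hij.le)
  have hrearr : ∑ i, c i * τ i < ∑ i, c i * i := by
    refine hmono.sum_mul_comp_perm_lt_sum_mul_iff.mpr fun hmv => hτ ?_
    refine Equiv.Perm.eq_one_of_strictMono fun i j hij => ?_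
    by_contra! hji
    have := hmv (by simpa using hji.lt_of_ne (τ.injective.ne hij.ne'))
    exact (hc hij).not_ge this
  have hsq : ∑ i, ((τ i : ℕ) : ℤ) ^ 2 = ∑ i : Fin k, ((i : ℕ) : ℤ) ^ 2 :=
    Equiv.sum_comp τ fun j : Fin k => ((j : ℕ) : ℤ) ^ 2
  have expand (f : Fin k → ℤ) :
      ∑ i, (c i - f i) ^ 2 = ∑ i, c i ^ 2 - 2 * ∑ i, c i * f i + ∑ i, f i ^ 2 := by
    simp only [sub_sq, Finset.sum_add_distrib, Finset.sum_sub_distrib, Finset.mul_sum]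
    ring_nf
  rw [expand, expand (fun i => ((τ i : ℕ) : ℤ)), hsq]
  linarith

theorem Matrix.det_submatrix_eq_zero_of_rank_lt {K ι κ : Type*} [Field K] [Fintype ι]
    [DecidableEq ι] [Fintype κ] (M : Matrix ι κ K) (hM : M.rank < Fintype.card ι) (c : ι → κ) :
    (M.submatrix id c).det = 0 := by
  by_contra h
  have := (M.submatrix id c).rank_of_isUnit
    ((M.submatrix id c).isUnit_iff_isUnit_det.mpr (isUnit_iff_ne_zero.mpr h))
  have := M.rank_submatrix_le id c
  omega

namespace MvPolynomial

section Field

variable {σ K : Type*} [Field K]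

theorem exists_eval_eq_indicator (S : Finset (σ → K)) (y : σ → K) :
    ∃ p : MvPolynomial σ K, eval y p = 1 ∧ ∀ z ∈ S, z ≠ y → eval z p = 0 := by
  classical
  have hsep (z : S.erase y) : ∃ t, (z : σ → K) t ≠ y t :=
    Function.ne_iff.mp (Finset.ne_of_mem_erase z.2)
  choose t ht using hsep
  set p₀ := ∏ z : S.erase y, (X (t z) - C ((z : σ → K) (t z))) with hp₀
  have hy : eval y p₀ ≠ 0 := by
    simp only [hp₀, map_prod, map_sub, eval_X, eval_C]
    exact Finset.prod_ne_zero_iff.mpr fun z _ => sub_ne_zero.mpr (ht z).symm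
  refine ⟨C (eval y p₀)⁻¹ * p₀, by simp [hy], fun z hz hzy => ?_⟩
  have : eval z p₀ = 0 := by
    simp only [hp₀, map_prod, map_sub, eval_X, eval_C]
    exact Finset.prod_eq_zero (Finset.mem_univ ⟨z, Finset.mem_erase.mpr ⟨hzy, hz⟩⟩) (sub_self _)
  simp [this]

theorem exists_eval_eq_on_finset (S : Finset (σ → K)) (v : (σ → K) → K) :
    ∃ p : MvPolynomial σ K, ∀ y ∈ S, eval y p = v y := by
  classical
  choose q hq₁ hq₀ using exists_eval_eq_indicator (σ := σ) S
  refine ⟨∑ y ∈ S, C (v y) * q y, fun z hz => ?_⟩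
  rw [map_sum, Finset.sum_eq_single z]
  · simp [hq₁]
  · intro y hy hyz
    simp [hq₀ y z hz (Ne.symm hyz)]
  · exact fun h => absurd hz h

theorem card_le_finrank_of_sup_vanishingIdeal_eq_top (W : Submodule K (MvPolynomial σ K))
    [FiniteDimensional K W] {V : Set (σ → K)}
    (hW : W ⊔ (vanishingIdeal K V).restrictScalars K = ⊤) (S : Finset (σ → K))
    (hS : ↑S ⊆ V) : S.card ≤ Module.finrank K W := by
  classical
  let ev : W →ₗ[K] (S → K) :=
    { toFun := fun w y => eval (y : σ → K) w
      map_add' := fun _ _ => by ext; simp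
      map_smul' := fun _ _ => by ext; simp }
  have hev : Function.Surjective ev := by
    intro v
    obtain ⟨p, hp⟩ := exists_eval_eq_on_finset S fun y => if h : y ∈ S then v ⟨y, h⟩ else 0
    obtain ⟨w, hw, j, hj, rfl⟩ := Submodule.mem_sup.mp (hW ▸ Submodule.mem_top : p ∈ _)
    refine ⟨⟨w, hw⟩, _root_.funext fun y => ?_⟩
    have hjy : eval (y : σ → K) j = 0 := hj y (hS y.2)
    simpa [ev, hjy] using hp y y.2
  simpa using ev.finrank_le_finrank_of_surjective hev

end Field

theorem finrank_restrictTotalDegree_le (σ K : Type*) [Fintype σ] [Field K]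
    (k : ℕ) : Module.finrank K (restrictTotalDegree σ K k) ≤ (Fintype.card σ + k).choose k := by
  classical
  rw [restrictTotalDegree, Module.finrank_eq_nat_card_basis (basisRestrictSupport K _)]
  let pad (γ : {γ : σ →₀ ℕ | (γ.sum fun _ e => e) ≤ k}) : Sym (Option σ) k :=
    (Sym.equivNatSumOfFintype _ _).symm
      ⟨fun o => o.elim (k - γ.1.degree) γ.1, by
        have := γ.2
        rw [Fintype.sum_option, Option.elim_none]
        simp only [Option.elim_some]
        rw [← Finsupp.degree_eq_sum]
        exact Nat.sub_add_cancel this⟩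
  have hpad : Function.Injective pad := by
    intro γ γ' h
    have := congrArg (fun s => ((Sym.equivNatSumOfFintype _ _) s).1) h
    simp only [pad, Equiv.apply_symm_apply] at this
    exact Subtype.ext (Finsupp.ext fun i => congrFun this (some i))
  calc Nat.card _ ≤ Nat.card (Sym (Option σ) k) := Nat.card_le_card_of_injective pad hpad
    _ = (Fintype.card σ + k).choose k := by
      rw [Sym.natCard_sym_eq_multichoose, Nat.card_eq_fintype_card, Fintype.card_option,
        Nat.multichoose_eq]
      congr 1
      omega

variable {σ R : Type*} [CommRing R]

theorem eq_top_of_one_mem_of_mul_X_mem {L : Submodule R (MvPolynomial σ R)} (h1 : 1 ∈ L)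
    (hX : ∀ p ∈ L, ∀ i, p * X i ∈ L) : L = ⊤ := by
  refine Submodule.eq_top_iff'.mpr fun p => ?_
  induction p using MvPolynomial.induction_on with
  | C a => simpa [C_eq_smul_one] using L.smul_mem a h1
  | add p q hp hq => exact L.add_mem hp hq
  | mul_X p i hp => exact hX p hp i

theorem restrictTotalDegree_le_of_monomial_mem {L : Submodule R (MvPolynomial σ R)} {k : ℕ}
    (h : ∀ γ : σ →₀ ℕ, γ.degree ≤ k → monomial γ 1 ∈ L) : restrictTotalDegree σ R k ≤ L := by
  rw [restrictTotalDegree, restrictSupport, AddMonoidAlgebra.supported_eq_span_single,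
    Submodule.span_le]
  rintro _ ⟨γ, hγ, rfl⟩
  exact h γ hγ

theorem restrictTotalDegree_sup_eq_top {I : Ideal (MvPolynomial σ R)} {k : ℕ}
    (h : ∀ γ : σ →₀ ℕ, γ.degree = k + 1 →
      monomial γ 1 ∈ restrictTotalDegree σ R k ⊔ I.restrictScalars R) :
    restrictTotalDegree σ R k ⊔ I.restrictScalars R = ⊤ := by
  set L := restrictTotalDegree σ R k ⊔ I.restrictScalars R
  have hW : restrictTotalDegree σ R (k + 1) ≤ L := by
    refine restrictTotalDegree_le_of_monomial_mem fun γ hγ => ?_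
    rcases hγ.lt_or_eq with hγ | hγ
    · refine Submodule.mem_sup_left ((mem_restrictTotalDegree _ _ _).mpr ?_)
      exact (totalDegree_monomial_le γ 1).trans (Nat.lt_succ_iff.mp hγ)
    · exact h γ hγ
  refine eq_top_of_one_mem_of_mul_X_mem
    (Submodule.mem_sup_left ((mem_restrictTotalDegree _ _ _).mpr (by simp))) fun p hp i => ?_
  obtain ⟨w, hw, j, hj, rfl⟩ := Submodule.mem_sup.mp hp
  rw [add_mul]
  refine L.add_mem (hW ((mem_restrictTotalDegree _ _ _).mpr ?_))
    (Submodule.mem_sup_right (I.mul_mem_right _ hj))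
  exact (totalDegree_mul _ _).trans (add_le_add ((mem_restrictTotalDegree _ _ _).mp hw)
    ((totalDegree_monomial_le _ _).trans (by simp)))

theorem totalDegree_prod_C_add_sub_prod_le {ι : Type*} (s : Finset ι) (a : ι → R)
    (q : ι → MvPolynomial σ R) (hq : ∀ i ∈ s, (q i).totalDegree ≤ 1) :
    (∏ i ∈ s, (C (a i) + q i) - ∏ i ∈ s, q i).totalDegree ≤ s.card - 1 := by
  classical
  rw [Finset.prod_add, ← Finset.add_sum_erase _ _ (Finset.empty_mem_powerset s)]
  simp only [Finset.prod_empty, one_mul, Finset.sdiff_empty, add_sub_cancel_left]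
  refine totalDegree_finsetSum_le fun t ht => ?_
  obtain ⟨htne, hts⟩ := Finset.mem_erase.mp ht
  rw [Finset.mem_powerset] at hts
  refine (totalDegree_mul _ _).trans ?_
  rw [← map_prod, totalDegree_C, zero_add]
  refine (totalDegree_finsetProd _ _).trans ?_
  calc ∑ i ∈ s \ t, (q i).totalDegree ≤ ∑ _i ∈ s \ t, 1 :=
        Finset.sum_le_sum fun i hi => hq i (Finset.mem_sdiff.mp hi).1
    _ ≤ s.card - 1 := by
        rw [Finset.sum_const, smul_eq_mul, mul_one, Finset.card_sdiff_of_subset hts]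
        have := Finset.card_pos.mpr (Finset.nonempty_iff_ne_empty.mpr htne)
        omega

theorem totalDegree_det_map_C_add_sub_det_le {ι : Type*} [Fintype ι] [DecidableEq ι]
    (M : Matrix ι ι R) (Q : Matrix ι ι (MvPolynomial σ R))
    (hQ : ∀ i j, (Q i j).totalDegree ≤ 1) :
    ((M.map C + Q).det - Q.det).totalDegree ≤ Fintype.card ι - 1 := by
  rw [Matrix.det_apply, Matrix.det_apply, ← Finset.sum_sub_distrib]
  refine totalDegree_finsetSum_le fun τ _ => ?_
  rw [← smul_sub]
  refine (totalDegree_smul_le _ _).trans ?_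
  simpa using totalDegree_prod_C_add_sub_prod_le Finset.univ (fun i => M (τ i) i)
    (fun i => Q (τ i) i) fun i _ => hQ _ _

end MvPolynomial

noncomputable def bandMatrix (m n : ℕ) :
    Matrix (Fin m) (Fin (m + n)) (MvPolynomial (Fin (n + 1)) ℂ) :=
  ∑ s : Fin (n + 1), (X s : MvPolynomial (Fin (n + 1)) ℂ) • (unitMatrix m n s).map C

noncomputable def sqWeight (n : ℕ) : (Fin (n + 1) →₀ ℕ) →+ ℕ :=
  Finsupp.weight fun s : Fin (n + 1) => (s : ℕ) ^ 2

def stairColumns {m n : ℕ} (d : Fin m → Fin (n + 1)) (i : Fin m) : Fin (m + n) :=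
  ⟨d i + i, by omega⟩

section EigenvalueLocus

variable {m n : ℕ}

theorem bandMatrix_apply (i : Fin m) (j : Fin (m + n)) :
    bandMatrix m n i j = ∑ s : Fin (n + 1), if (j : ℕ) = i + s then X s else 0 := by
  simp [bandMatrix, unitMatrix, Matrix.sum_apply]

theorem bandMatrix_apply_of_eq {i : Fin m} {j : Fin (m + n)} {s : Fin (n + 1)}
    (h : (j : ℕ) = i + s) : bandMatrix m n i j = X s := by
  rw [bandMatrix_apply, Finset.sum_eq_single s (fun t _ hts => if_neg (by omega)) (by simp)]
  exact if_pos h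

theorem bandMatrix_apply_of_forall_ne {i : Fin m} {j : Fin (m + n)}
    (h : ∀ s : Fin (n + 1), (j : ℕ) ≠ i + s) : bandMatrix m n i j = 0 := by
  simp [bandMatrix_apply, h]

theorem totalDegree_bandMatrix_apply_le (i : Fin m) (j : Fin (m + n)) :
    (bandMatrix m n i j).totalDegree ≤ 1 := by
  by_cases h : ∃ s : Fin (n + 1), (j : ℕ) = i + s
  · obtain ⟨s, hs⟩ := h
    rw [bandMatrix_apply_of_eq hs, totalDegree_X]
  · push Not at h
    simp [bandMatrix_apply_of_forall_ne h]

theorem map_eval_sub_bandMatrix (A : Matrix (Fin m) (Fin (m + n)) ℂ) (x : Fin (n + 1) → ℂ) :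
    (A.map C - bandMatrix m n).map (eval x) = A - ∑ s, x s • unitMatrix m n s := by
  ext i j
  simp [bandMatrix, Matrix.sum_apply]

theorem prod_bandMatrix_eq_monomial {r : Fin m → Fin m} {c : Fin m → Fin (m + n)}
    {s : Fin m → Fin (n + 1)} (h : ∀ i, (c i : ℕ) = r i + s i) :
    ∏ i, bandMatrix m n (r i) (c i) = monomial (∑ i, Finsupp.single (s i) 1) 1 := by
  rw [monomial_sum_one]
  exact Finset.prod_congr rfl fun i _ => bandMatrix_apply_of_eq (h i)

theorem det_submatrix_mem_vanishingIdeal (A : Matrix (Fin m) (Fin (m + n)) ℂ)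
    (c : Fin m → Fin (m + n)) :
    ((A.map C - bandMatrix m n).submatrix id c).det ∈ vanishingIdeal ℂ (eigLocus m n A) := by
  intro x hx
  change eval x _ = 0
  rw [RingHom.map_det, RingHom.mapMatrix_apply, ← Matrix.submatrix_map,
    map_eval_sub_bandMatrix]
  exact Matrix.det_submatrix_eq_zero_of_rank_lt _ (by simpa [eigLocus] using hx) c

theorem sqWeight_sum_single {k : ℕ} (s : Fin k → Fin (n + 1)) :
    sqWeight n (∑ i, Finsupp.single (s i) 1) = ∑ i, (s i : ℕ) ^ 2 := by
  simp [sqWeight, map_sum, Finsupp.weight_single]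

theorem sqWeight_le_mul_degree (γ : Fin (n + 1) →₀ ℕ) : sqWeight n γ ≤ n ^ 2 * γ.degree := by
  rw [sqWeight, Finsupp.weight_eq_sum, Finsupp.degree_eq_sum, Finset.mul_sum]
  refine Finset.sum_le_sum fun s _ => ?_
  rw [smul_eq_mul, mul_comm]
  exact Nat.mul_le_mul_right _ (Nat.pow_le_pow_left (Nat.lt_succ_iff.mp s.isLt) 2)

theorem prod_bandMatrix_stairColumns_one (d : Fin m → Fin (n + 1)) :
    ∏ i, bandMatrix m n i (stairColumns d i) = monomial (∑ i, Finsupp.single (d i) 1) 1 :=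
  prod_bandMatrix_eq_monomial fun i => by simp [stairColumns, add_comm]

theorem prod_bandMatrix_stairColumns_perm {d : Fin m → Fin (n + 1)} (hd : Monotone d)
    {τ : Equiv.Perm (Fin m)} (hτ : τ ≠ 1) :
    ∏ i, bandMatrix m n (τ i) (stairColumns d i) = 0 ∨
      ∃ δ : Fin (n + 1) →₀ ℕ, δ.degree = m ∧
        sqWeight n (∑ i, Finsupp.single (d i) 1) < sqWeight n δ ∧
        ∏ i, bandMatrix m n (τ i) (stairColumns d i) = monomial δ 1 := by
  by_cases hband : ∀ i, ∃ s : Fin (n + 1), (stairColumns d i : ℕ) = τ i + s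
  · choose s hs using hband
    refine Or.inr ⟨∑ i, Finsupp.single (s i) 1, by simp [map_sum], ?_,
      prod_bandMatrix_eq_monomial hs⟩
    rw [sqWeight_sum_single, sqWeight_sum_single]
    have hc : StrictMono fun i : Fin m => ((d i : ℕ) + i : ℤ) := fun i j hij => by
      have := hd hij.le
      simp only [Fin.le_def] at this
      simp only [Fin.lt_def] at hij
      dsimp only
      omega
    have key := sum_sq_sub_lt_sum_sq_sub_perm hc hτ
    have hs' : ∀ i, ((d i : ℕ) + i : ℤ) - (τ i : ℕ) = (s i : ℕ) := fun i => by
      have := hs i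
      simp only [stairColumns] at this
      omega
    simp only [hs', add_sub_cancel_right] at key
    exact_mod_cast key
  · push Not at hband
    obtain ⟨i, hi⟩ := hband
    exact Or.inl (Finset.prod_eq_zero (Finset.mem_univ i) (bandMatrix_apply_of_forall_ne hi))

theorem det_bandMatrix_stairColumns_sub_monomial_mem {d : Fin m → Fin (n + 1)} (hd : Monotone d)
    {L : Submodule ℂ (MvPolynomial (Fin (n + 1)) ℂ)}
    (hL : ∀ δ : Fin (n + 1) →₀ ℕ, δ.degree = m →
      sqWeight n (∑ i, Finsupp.single (d i) 1) < sqWeight n δ → monomial δ 1 ∈ L) :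
    ((bandMatrix m n).submatrix id (stairColumns d)).det -
      monomial (∑ i, Finsupp.single (d i) 1) 1 ∈ L := by
  rw [Matrix.det_apply, ← Finset.add_sum_erase _ _ (Finset.mem_univ 1)]
  simp only [Matrix.submatrix_apply, id, Equiv.Perm.sign_one, one_smul, Equiv.Perm.one_apply,
    prod_bandMatrix_stairColumns_one, add_sub_cancel_left]
  refine L.sum_mem fun τ hτ => ?_
  rw [Units.smul_def]
  refine Submodule.smul_of_tower_mem _ _ ?_
  rcases prod_bandMatrix_stairColumns_perm hd (Finset.ne_of_mem_erase hτ) with h | ⟨δ, hδ, hlt, h⟩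
  · rw [h]; exact L.zero_mem
  · rw [h]; exact hL δ hδ hlt

theorem monomial_mem_restrictTotalDegree_sup_vanishingIdeal (A : Matrix (Fin m) (Fin (m + n)) ℂ)
    (γ : Fin (n + 1) →₀ ℕ) (hγ : γ.degree = m) :
    monomial γ 1 ∈ restrictTotalDegree (Fin (n + 1)) ℂ (m - 1) ⊔
      (vanishingIdeal ℂ (eigLocus m n A)).restrictScalars ℂ := by
  set L := restrictTotalDegree (Fin (n + 1)) ℂ (m - 1) ⊔
    (vanishingIdeal ℂ (eigLocus m n A)).restrictScalars ℂ
  -- `sqWeight n γ ≤ n ^ 2 * m`, so this is a downward induction on the weight.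
  induction hgap : n ^ 2 * m - sqWeight n γ using Nat.strong_induction_on generalizing γ with
  | _ gap IH =>
  obtain ⟨d, hd, rfl⟩ := γ.exists_monotone_sum_single_eq hγ
  set B := (bandMatrix m n).submatrix id (stairColumns d)
  set minor := ((A.map C - bandMatrix m n).submatrix id (stairColumns d)).det
  have hB : B.det - monomial (∑ i, Finsupp.single (d i) 1) 1 ∈ L :=
    det_bandMatrix_stairColumns_sub_monomial_mem hd fun δ hδ hlt =>
      IH _ (by have := sqWeight_le_mul_degree δ; rw [hδ] at this; omega) δ hδ rfl
  have hminor : minor ∈ L := Submodule.mem_sup_right (det_submatrix_mem_vanishingIdeal A _)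
  have hlow : minor - (-B).det ∈ L := by
    refine Submodule.mem_sup_left ((mem_restrictTotalDegree _ _ _).mpr ?_)
    have hsplit : (A.map C - bandMatrix m n).submatrix id (stairColumns d) =
        (A.submatrix id (stairColumns d)).map C + -B := by
      ext i j; simp [B, sub_eq_add_neg]
    simpa [minor, hsplit] using totalDegree_det_map_C_add_sub_det_le _ (-B)
      fun i j => (totalDegree_neg _).trans_le (totalDegree_bandMatrix_apply_le _ _)
  have hnegB : (-B).det ∈ L := by simpa using L.sub_mem hminor hlow
  rw [Matrix.det_neg_eq_smul, Submodule.smul_mem_iff'] at hnegB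
  simpa using L.sub_mem hnegB hB

theorem restrictTotalDegree_sup_vanishingIdeal_eigLocus_eq_top (hm : 1 ≤ m)
    (A : Matrix (Fin m) (Fin (m + n)) ℂ) :
    restrictTotalDegree (Fin (n + 1)) ℂ (m - 1) ⊔
      (vanishingIdeal ℂ (eigLocus m n A)).restrictScalars ℂ = ⊤ :=
  restrictTotalDegree_sup_eq_top fun γ hγ =>
    monomial_mem_restrictTotalDegree_sup_vanishingIdeal A γ (by omega)

end EigenvalueLocus

theorem stmt0 (m n : ℕ) (hm : 1 ≤ m) (A : Matrix (Fin m) (Fin (m + n)) ℂ) :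
    (eigLocus m n A).Finite ∧ (eigLocus m n A).ncard ≤ (m + n).choose (n + 1) := by
  refine Set.finite_and_ncard_le_of_forall_finset_card_le fun S hS => ?_
  calc S.card ≤ Module.finrank ℂ (restrictTotalDegree (Fin (n + 1)) ℂ (m - 1)) :=
        card_le_finrank_of_sup_vanishingIdeal_eq_top _
          (restrictTotalDegree_sup_vanishingIdeal_eigLocus_eq_top hm A) S hS
    _ ≤ (n + 1 + (m - 1)).choose (m - 1) := by
        simpa using finrank_restrictTotalDegree_le (Fin (n + 1)) ℂ (m - 1)
    _ = (m + n).choose (n + 1) := by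
        rw [show n + 1 + (m - 1) = m - 1 + (n + 1) by omega, Nat.choose_symm_add]
        congr 1
        omega
end

section
/- Let A = (a_{ij})_{i,j≥1} be an arbitrary infinite complex matrix, n ≥ 0, m ≥ 1, and I = {i_1 < … < i_m} ⊆ {1,…,m+n}. Define the monomial 𝔪_I := Π_{j=1}^m x_{i_j − j} (note i_j − j ∈ {0,…,n}). Then: (a) the coefficient of 𝔪_I in P^I_A (with the convention P^I_A = det(A_I) with entries a − x) equals (−1)^m; and (b) every monomial of total degree m that occurs with nonzero coefficient in P^I_A is of the form 𝔪_{I'} for an index set I' = {i'_1 < … < i'_m} ⊆ {1,…,m+n} that is less than or equal to I in the lexicographic order on increasing index sequences. -/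
/-- The polynomial `P^I_A` (see the paper): determinant of the `m × m` submatrix of
`A - ∑ x_s I_s` formed by the first `m` rows and the columns indexed by `I` (`0`-based). -/
noncomputable def PIA (A : ℕ → ℕ → ℂ) (n m : ℕ) (i : Fin m → Fin (m + n)) :
    MvPolynomial (Fin (n + 1)) ℂ :=
  Matrix.det (Matrix.of fun r c : Fin m =>
    MvPolynomial.C (A (r : ℕ) ((i c : ℕ))) -
      if h : (r : ℕ) ≤ (i c : ℕ) ∧ (i c : ℕ) ≤ (r : ℕ) + n then
        MvPolynomial.X (⟨(i c : ℕ) - (r : ℕ), by omega⟩ : Fin (n + 1))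
      else 0)

/-- The exponent vector of the monomial `𝔪_I = ∏_{j} x_{i_j - j}` associated to the index
set `I = {i_0 < i_1 < … < i_{m-1}} ⊆ {0,…,m+n-1}` (for strictly increasing `i` one always
has `i_j - j ∈ {0,…,n}`, so the guard is always satisfied). -/
noncomputable def mIdx (n m : ℕ) (i : Fin m → Fin (m + n)) : Fin (n + 1) →₀ ℕ :=
  ∑ j : Fin m,
    if h : (i j : ℕ) - (j : ℕ) ≤ n then
      Finsupp.single (⟨(i j : ℕ) - (j : ℕ), by omega⟩ : Fin (n + 1)) 1
    else 0

open Finset MvPolynomial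

namespace Stmt2Aux


lemma le_of_strictMono {a : ℕ} (f : Fin a → ℕ) (hf : StrictMono f) (l : Fin a) :
    (l : ℕ) ≤ f l := by
  obtain ⟨k, hk⟩ := l
  induction k with
  | zero => exact Nat.zero_le _
  | succ k ih =>
      have hk' : k < a := Nat.lt_of_succ_lt hk
      have h1 : f ⟨k, hk'⟩ < f ⟨k + 1, hk⟩ := hf (by simp [Fin.lt_def])
      simpa using Nat.lt_of_le_of_lt (ih hk') h1

/-- The embedding `Fin k ↪ Fin m`. -/
def emb {m k : ℕ} (hk : k ≤ m) : Fin k ↪ Fin m :=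
  ⟨fun l => ⟨l, lt_of_lt_of_le l.2 hk⟩, fun a b hab => by simpa [Fin.ext_iff] using hab⟩

lemma Ik_eq {m k : ℕ} (hk : k ≤ m) :
    (univ.filter fun j : Fin m => (j : ℕ) < k) = Finset.map (emb hk) univ := by
  ext j
  simp only [mem_filter, mem_univ, true_and, Finset.mem_map, emb, Function.Embedding.coeFn_mk]
  constructor
  · intro hj; exact ⟨⟨j, hj⟩, rfl⟩
  · rintro ⟨l, rfl⟩; exact l.2

lemma card_Ik {m k : ℕ} (hk : k ≤ m) :
    (univ.filter fun j : Fin m => (j : ℕ) < k).card = k := by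
  rw [Ik_eq hk, Finset.card_map, Finset.card_univ, Fintype.card_fin]

lemma sum_filter_le_sum {m : ℕ} (f : Fin m → ℕ) (hf : Monotone f) (K : Finset (Fin m)) :
    ∑ j ∈ univ.filter (fun j : Fin m => (j : ℕ) < K.card), f j ≤ ∑ j ∈ K, f j := by
  set k := K.card with hk
  have hkm : k ≤ m := by simpa using Finset.card_le_univ K
  have e := K.orderIsoOfFin hk.symm
  have hmono : StrictMono (fun l : Fin k => ((e l : Fin m) : ℕ)) := by
    intro a b hab
    have : (e a : Fin m) < (e b : Fin m) := e.strictMono hab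
    exact this
  have hR : ∑ j ∈ K, f j = ∑ l : Fin k, f (e l) := by
    rw [← Finset.sum_coe_sort K f]
    exact (Equiv.sum_comp e.toEquiv (fun x : K => f x)).symm
  have hL : ∑ j ∈ univ.filter (fun j : Fin m => (j : ℕ) < k), f j
      = ∑ l : Fin k, f (emb hkm l) := by
    rw [Ik_eq hkm, Finset.sum_map]
  rw [hL, hR]
  apply Finset.sum_le_sum
  intro l _
  apply hf
  have h1 : ((emb hkm l : Fin m) : ℕ) ≤ ((e l : Fin m) : ℕ) :=
    le_trans (le_of_eq rfl) (le_of_strictMono _ hmono l)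
  exact h1

/-- prefix-sum comparison: if `t` is a rearrangement of a monotone `g`, prefix sums of `g`
bound the corresponding partial sums of `t`. -/
lemma prefix_le {m : ℕ} (t g : Fin m → ℕ) (hg : Monotone g) (π : Equiv.Perm (Fin m))
    (hπ : ∀ c, t c = g (π c)) (k : ℕ) (hk : k ≤ m) :
    ∑ c ∈ univ.filter (fun j : Fin m => (j : ℕ) < k), g c ≤
      ∑ c ∈ univ.filter (fun j : Fin m => (j : ℕ) < k), t c := by
  set Ik := univ.filter (fun j : Fin m => (j : ℕ) < k) with hIk
  have h1 : ∑ c ∈ Ik, t c = ∑ j ∈ Ik.image π, g j := by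
    rw [Finset.sum_image (fun a _ b _ h => π.injective h)]
    exact Finset.sum_congr rfl fun c _ => hπ c
  have hcard : (Ik.image π).card = k := by
    rw [Finset.card_image_of_injective _ π.injective, hIk, card_Ik hk]
  have := sum_filter_le_sum g hg (Ik.image π)
  rw [hcard] at this
  rw [h1]
  exact this



def Vld {n m : ℕ} (i : Fin m → Fin (m + n)) (σ : Equiv.Perm (Fin m)) : Prop :=
  ∀ c, (σ c : ℕ) ≤ (i c : ℕ) ∧ (i c : ℕ) ≤ (σ c : ℕ) + n

noncomputable def Dv {n m : ℕ} (i : Fin m → Fin (m + n)) (σ : Equiv.Perm (Fin m)) :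
    Fin (n + 1) →₀ ℕ :=
  ∑ c : Fin m,
    if h : (i c : ℕ) - (σ c : ℕ) ≤ n then
      Finsupp.single (⟨(i c : ℕ) - (σ c : ℕ), Nat.lt_succ_of_le h⟩ : Fin (n + 1)) 1
    else 0

lemma prod_X_eq_monomial {ι : Type*} [DecidableEq ι] {τ : Type*} (f : ι → τ) (s : Finset ι) :
    (∏ c ∈ s, (X (f c) : MvPolynomial τ ℂ)) =
      monomial (∑ c ∈ s, Finsupp.single (f c) 1) 1 := by
  classical
  induction s using Finset.cons_induction with
  | empty => simp
  | cons a s ha ih =>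
      rw [Finset.prod_cons, Finset.sum_cons, ih, X, monomial_mul, one_mul]

open Classical in
lemma coeff_prod (A : ℕ → ℕ → ℂ) (n m : ℕ) (i : Fin m → Fin (m + n))
    (σ : Equiv.Perm (Fin m)) (d : Fin (n + 1) →₀ ℕ) (hd : (∑ s : Fin (n + 1), d s) = m) :
    coeff d (∏ c : Fin m,
      (MvPolynomial.C (A ((σ c : ℕ)) ((i c : ℕ))) -
        if h : (σ c : ℕ) ≤ (i c : ℕ) ∧ (i c : ℕ) ≤ (σ c : ℕ) + n then
          MvPolynomial.X (⟨(i c : ℕ) - (σ c : ℕ), by omega⟩ : Fin (n + 1))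
        else 0)) =
    if Vld i σ ∧ d = Dv i σ then (-1 : ℂ) ^ m else 0 := by
  set Q : Fin m → MvPolynomial (Fin (n + 1)) ℂ := fun c =>
    if h : (σ c : ℕ) ≤ (i c : ℕ) ∧ (i c : ℕ) ≤ (σ c : ℕ) + n then
      MvPolynomial.X (⟨(i c : ℕ) - (σ c : ℕ), by omega⟩ : Fin (n + 1))
    else 0 with hQ
  have hsupd : (∑ s ∈ d.support, d s) = m := by
    have h0 : (∑ s ∈ d.support, d s) = ∑ s : Fin (n+1), d s :=
      Finset.sum_subset (Finset.subset_univ _)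
        (fun x _ hx => Finsupp.notMem_support_iff.mp hx)
    rw [h0, hd]
  have step1 : (∏ c : Fin m,
      (MvPolynomial.C (A ((σ c : ℕ)) ((i c : ℕ))) - Q c)) =
      ∑ t ∈ (univ : Finset (Fin m)).powerset,
        (∏ c ∈ t, (-Q c)) * ∏ c ∈ univ \ t, MvPolynomial.C (A ((σ c : ℕ)) ((i c : ℕ))) := by
    rw [← Finset.prod_add]
    exact Finset.prod_congr rfl fun c _ => by ring
  rw [step1, coeff_sum]
  have hzero : ∀ t ∈ (univ : Finset (Fin m)).powerset, t ≠ univ →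
      coeff d ((∏ c ∈ t, (-Q c)) * ∏ c ∈ univ \ t, MvPolynomial.C (A ((σ c : ℕ)) ((i c : ℕ)))) = 0 := by
    intro t ht hne
    apply coeff_eq_zero_of_totalDegree_lt
    rw [hsupd]
    have h1 : (∏ c ∈ t, (-Q c)).totalDegree ≤ t.card := by
      refine le_trans (totalDegree_finset_prod _ _) ?_
      have : ∀ c ∈ t, (-Q c).totalDegree ≤ 1 := by
        intro c _
        rw [totalDegree_neg]
        by_cases hc : (σ c : ℕ) ≤ (i c : ℕ) ∧ (i c : ℕ) ≤ (σ c : ℕ) + n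
        · have h4 : Q c = X (⟨(i c : ℕ) - (σ c : ℕ), by omega⟩ : Fin (n + 1)) := dif_pos hc
          rw [h4, totalDegree_X]
        · have h4 : Q c = 0 := dif_neg hc
          rw [h4]
          simp
      calc ∑ c ∈ t, (-Q c).totalDegree ≤ ∑ c ∈ t, 1 := Finset.sum_le_sum this
        _ = t.card := by simp
    have h2 : (∏ c ∈ univ \ t, MvPolynomial.C (A ((σ c : ℕ)) ((i c : ℕ))) :
        MvPolynomial (Fin (n + 1)) ℂ).totalDegree = 0 := by
      rw [← map_prod, totalDegree_C]
    have h3 : t.card < m := by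
      have hsub : t ⊆ univ := Finset.mem_powerset.mp ht
      have := Finset.card_lt_card (Finset.ssubset_iff_subset_ne.mpr ⟨hsub, hne⟩)
      simpa using this
    calc ((∏ c ∈ t, (-Q c)) * ∏ c ∈ univ \ t, MvPolynomial.C (A ((σ c : ℕ)) ((i c : ℕ)))).totalDegree
        ≤ _ + _ := totalDegree_mul _ _
      _ ≤ t.card + 0 := Nat.add_le_add h1 (le_of_eq h2)
      _ < m := by omega
  rw [Finset.sum_eq_single univ hzero (by simp)]
  rw [Finset.sdiff_self, Finset.prod_empty, mul_one]
  have hneg : (∏ c : Fin m, (-Q c)) = (-1 : MvPolynomial (Fin (n+1)) ℂ) ^ m * ∏ c : Fin m, Q c := by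
    calc ∏ c : Fin m, (-Q c) = ∏ c : Fin m, ((-1) * Q c) := by simp
      _ = (∏ _c : Fin m, (-1 : MvPolynomial (Fin (n+1)) ℂ)) * ∏ c : Fin m, Q c :=
          Finset.prod_mul_distrib
      _ = (-1) ^ m * ∏ c : Fin m, Q c := by simp
  rw [hneg]
  by_cases hv : Vld i σ
  · have hQX : ∀ c : Fin m, Q c = X (⟨(i c : ℕ) - (σ c : ℕ),
        Nat.lt_succ_of_le (by have := (hv c).2; omega)⟩ : Fin (n + 1)) := by
      intro c
      exact dif_pos (hv c)
    have hDv : Dv i σ = ∑ c : Fin m,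
        Finsupp.single (⟨(i c : ℕ) - (σ c : ℕ),
          Nat.lt_succ_of_le (by have := (hv c).2; omega)⟩ : Fin (n + 1)) 1 := by
      rw [Dv]
      refine Finset.sum_congr rfl fun c _ => ?_
      rw [dif_pos (by have := (hv c).2; omega : (i c : ℕ) - (σ c : ℕ) ≤ n)]
    have : (∏ c : Fin m, Q c) = monomial (Dv i σ) 1 := by
      rw [hDv]
      calc (∏ c : Fin m, Q c) = ∏ c : Fin m, X _ := Finset.prod_congr rfl fun c _ => hQX c
        _ = _ := prod_X_eq_monomial _ _
    rw [this]
    have hpow : ((-1 : MvPolynomial (Fin (n + 1)) ℂ)) ^ m = C ((-1 : ℂ) ^ m) := by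
      rw [map_pow, map_neg, map_one]
    rw [hpow, coeff_C_mul, coeff_monomial]
    by_cases he : d = Dv i σ
    · rw [if_pos he.symm, if_pos ⟨hv, he⟩, mul_one]
    · rw [if_neg (fun h => he h.symm), if_neg (by tauto), mul_zero]
  · obtain ⟨c₀, hc₀⟩ : ∃ c₀, ¬((σ c₀ : ℕ) ≤ (i c₀ : ℕ) ∧ (i c₀ : ℕ) ≤ (σ c₀ : ℕ) + n) := by
      by_contra h
      push_neg at h
      exact hv fun c => ⟨(h c).1, (h c).2⟩
    have : (∏ c : Fin m, Q c) = 0 := by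
      apply Finset.prod_eq_zero (Finset.mem_univ c₀)
      exact dif_neg hc₀
    rw [this, mul_zero, if_neg (by tauto)]
    simp

end Stmt2Aux
namespace Stmt2Aux

open Classical in
lemma coeff_PIA (A : ℕ → ℕ → ℂ) (n m : ℕ) (i : Fin m → Fin (m + n))
    (d : Fin (n + 1) →₀ ℕ) (hd : (∑ s : Fin (n + 1), d s) = m) :
    coeff d (PIA A n m i) = ∑ σ : Equiv.Perm (Fin m),
      if Vld i σ ∧ d = Dv i σ then ((Equiv.Perm.sign σ : ℤ) : ℂ) * (-1 : ℂ) ^ m else 0 := by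
  rw [PIA, Matrix.det_apply, coeff_sum]
  refine Finset.sum_congr rfl fun σ _ => ?_
  rw [MvPolynomial.coeff_smul]
  have h1 := coeff_prod A n m i σ d hd
  simp only [Matrix.of_apply]
  rw [h1]
  split_ifs
  · rw [Units.smul_def, zsmul_eq_mul]
  · rw [smul_zero]

end Stmt2Aux
namespace Stmt2Aux

variable {n m : ℕ} {i : Fin m → Fin (m + n)}

lemma val_strictMono (hi : StrictMono i) : StrictMono (fun c : Fin m => (i c : ℕ)) :=
  fun a b hab => hi hab

lemma lb (hi : StrictMono i) (c : Fin m) : (c : ℕ) ≤ (i c : ℕ) :=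
  le_of_strictMono _ (val_strictMono hi) c

lemma add_le (hi : StrictMono i) (k l : ℕ) (hk : k < m) (h : k + l < m) :
    (i ⟨k, hk⟩ : ℕ) + l ≤ (i ⟨k + l, h⟩ : ℕ) := by
  induction l with
  | zero => simp
  | succ l ih =>
      have h' : k + l < m := by omega
      have h1 : i ⟨k + l, h'⟩ < i ⟨k + (l + 1), h⟩ := by
        apply hi
        rw [Fin.lt_def]
        show k + l < k + (l + 1)
        omega
      have h1' : (i ⟨k + l, h'⟩ : ℕ) < (i ⟨k + (l + 1), h⟩ : ℕ) := Fin.lt_def.mp h1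
      have h2 := ih h'
      omega

lemma ub (hi : StrictMono i) (c : Fin m) : (i c : ℕ) ≤ (c : ℕ) + n := by
  have hc : (c : ℕ) < m := c.2
  have hlt : (c : ℕ) + (m - 1 - (c : ℕ)) < m := by omega
  have h1 := add_le hi c (m - 1 - c) hc hlt
  have h2 : (i ⟨(c : ℕ) + (m - 1 - (c : ℕ)), hlt⟩ : ℕ) < m + n := (i _).2
  have h3 : i ⟨(c : ℕ), hc⟩ = i c := congrArg i (Fin.ext rfl)
  rw [h3] at h1
  omega

lemma lam_mono (hi : StrictMono i) :
    Monotone (fun c : Fin m => (i c : ℕ) - (c : ℕ)) := by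
  intro a b hab
  dsimp only
  rcases eq_or_lt_of_le hab with h | h
  · rw [h]
  · have hab' : (a : ℕ) < (b : ℕ) := h
    have ha : (a : ℕ) < m := a.2
    have hlt : (a : ℕ) + ((b : ℕ) - (a : ℕ)) < m := by have := b.2; omega
    have h1 := add_le hi a ((b : ℕ) - (a : ℕ)) ha hlt
    have h2 : (⟨(a : ℕ) + ((b : ℕ) - (a : ℕ)), hlt⟩ : Fin m) = b := by
      apply Fin.ext
      show (a : ℕ) + ((b : ℕ) - (a : ℕ)) = (b : ℕ)
      omega
    rw [h2] at h1
    have h3 : i ⟨(a : ℕ), ha⟩ = i a := congrArg i (Fin.ext rfl)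
    rw [h3] at h1
    omega

end Stmt2Aux
namespace Stmt2Aux

lemma filt_succ {m : ℕ} (c : Fin m) :
    (univ.filter fun j : Fin m => (j : ℕ) < (c : ℕ) + 1) =
      insert c (univ.filter fun j : Fin m => (j : ℕ) < (c : ℕ)) := by
  ext j
  simp only [mem_filter, mem_univ, true_and, Finset.mem_insert]
  constructor
  · intro hj
    rcases Nat.lt_or_ge (j : ℕ) (c : ℕ) with h | h
    · exact Or.inr h
    · exact Or.inl (Fin.ext (by omega))
  · rintro (rfl | h)
    · omega
    · omega

lemma perm_eq_one {m : ℕ} (σ : Equiv.Perm (Fin m))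
    (h : ∀ k, k ≤ m → (∑ c ∈ univ.filter (fun j : Fin m => (j : ℕ) < k), ((σ c : ℕ))) =
      ∑ c ∈ univ.filter (fun j : Fin m => (j : ℕ) < k), (c : ℕ)) : σ = 1 := by
  apply Equiv.ext
  intro c
  have hc : (c : ℕ) < m := c.2
  have hnotmem : c ∉ univ.filter (fun j : Fin m => (j : ℕ) < (c : ℕ)) := by simp
  have h1 := h (c : ℕ) (by omega)
  have h2 := h ((c : ℕ) + 1) (by omega)
  rw [filt_succ c, Finset.sum_insert hnotmem, Finset.sum_insert hnotmem] at h2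
  have : (σ c : ℕ) = (c : ℕ) := by omega
  simpa [Fin.ext_iff] using this

lemma exists_perm {m n : ℕ} (F G : Fin m → Fin (n + 1))
    (h : (∑ c : Fin m, Finsupp.single (F c) (1 : ℕ)) = ∑ c : Fin m, Finsupp.single (G c) 1) :
    ∃ π : Equiv.Perm (Fin m), ∀ c, F c = G (π c) := by
  have hcard : ∀ v, Fintype.card {c // F c = v} = Fintype.card {c // G c = v} := by
    intro v
    have h1 : (∑ c : Fin m, if F c = v then (1 : ℕ) else 0) =
        ∑ c : Fin m, if G c = v then 1 else 0 := by
      have := DFunLike.congr_fun h v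
      simpa [Finset.sum_apply', Finsupp.single_apply] using this
    rw [Fintype.card_subtype, Fintype.card_subtype, Finset.card_filter, Finset.card_filter]
    exact h1
  let e : ∀ v, {c // F c = v} ≃ {c // G c = v} := fun v => Fintype.equivOfCardEq (hcard v)
  exact ⟨Equiv.ofFiberEquiv e, fun c => (Equiv.ofFiberEquiv_map e c).symm⟩

variable {n m : ℕ} {i : Fin m → Fin (m + n)} {σ : Equiv.Perm (Fin m)}

lemma sum_t_sigma (hv : Vld i σ) (k : ℕ) (hk : k ≤ m) :
    (∑ c ∈ univ.filter (fun j : Fin m => (j : ℕ) < k), (((i c : ℕ) - (σ c : ℕ)) + (σ c : ℕ))) =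
      ∑ c ∈ univ.filter (fun j : Fin m => (j : ℕ) < k), (i c : ℕ) :=
  Finset.sum_congr rfl fun c _ => by have := (hv c).1; omega

lemma sigma_prefix_ge (σ : Equiv.Perm (Fin m)) (k : ℕ) (hk : k ≤ m) :
    (∑ c ∈ univ.filter (fun j : Fin m => (j : ℕ) < k), (c : ℕ)) ≤
      ∑ c ∈ univ.filter (fun j : Fin m => (j : ℕ) < k), (σ c : ℕ) :=
  prefix_le (fun c => (σ c : ℕ)) (fun c => (c : ℕ)) (fun a b hab => hab) σ (fun c => rfl) k hk

lemma cond_iff (hi : StrictMono i) (σ : Equiv.Perm (Fin m)) :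
    (Vld i σ ∧ mIdx n m i = Dv i σ) ↔ σ = 1 := by
  constructor
  · rintro ⟨hv, he⟩
    set t : Fin m → ℕ := fun c => (i c : ℕ) - (σ c : ℕ) with ht
    have htn : ∀ c, t c ≤ n := fun c => by have := (hv c).2; simp only [ht]; omega
    have hgn : ∀ c : Fin m, (i c : ℕ) - (c : ℕ) ≤ n := fun c => by have := ub hi c; omega
    set F : Fin m → Fin (n + 1) := fun c => ⟨t c, Nat.lt_succ_of_le (htn c)⟩ with hF
    set G : Fin m → Fin (n + 1) := fun c => ⟨(i c : ℕ) - (c : ℕ), Nat.lt_succ_of_le (hgn c)⟩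
      with hG
    have hDv : Dv i σ = ∑ c : Fin m, Finsupp.single (F c) 1 := by
      rw [Dv]
      exact Finset.sum_congr rfl fun c _ => dif_pos (htn c)
    have hmI : mIdx n m i = ∑ c : Fin m, Finsupp.single (G c) 1 := by
      rw [mIdx]
      exact Finset.sum_congr rfl fun c _ => dif_pos (hgn c)
    have he' : (∑ c : Fin m, Finsupp.single (F c) (1 : ℕ)) = ∑ c : Fin m, Finsupp.single (G c) 1 := by
      rw [← hDv, ← hmI, he]
    obtain ⟨π, hπ⟩ := exists_perm F G he'
    have hπ' : ∀ c, t c = (i (π c) : ℕ) - ((π c : ℕ)) := fun c =>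
      congrArg Fin.val (hπ c)
    apply perm_eq_one
    intro k hk
    have hA := prefix_le t (fun c => (i c : ℕ) - (c : ℕ)) (lam_mono hi) π hπ' k hk
    have hB := sigma_prefix_ge σ k hk
    have hC := sum_t_sigma hv k hk
    have hD : (∑ c ∈ univ.filter (fun j : Fin m => (j : ℕ) < k),
        (((i c : ℕ) - (c : ℕ)) + (c : ℕ))) =
        ∑ c ∈ univ.filter (fun j : Fin m => (j : ℕ) < k), (i c : ℕ) :=
      Finset.sum_congr rfl fun c _ => by have := lb hi c; omega
    rw [Finset.sum_add_distrib] at hC hD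
    have hA' : (∑ c ∈ univ.filter (fun j : Fin m => (j : ℕ) < k), ((i c : ℕ) - (c : ℕ))) ≤
        ∑ c ∈ univ.filter (fun j : Fin m => (j : ℕ) < k), ((i c : ℕ) - (σ c : ℕ)) := hA
    omega
  · rintro rfl
    refine ⟨fun c => ⟨lb hi c, ub hi c⟩, ?_⟩
    rfl

end Stmt2Aux
namespace Stmt2Aux

variable {n m : ℕ} {i : Fin m → Fin (m + n)} {σ : Equiv.Perm (Fin m)}

lemma exists_i' (hv : Vld i σ) :
    ∃ i' : Fin m → Fin (m + n), StrictMono i' ∧ Dv i σ = mIdx n m i' ∧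
      ((∀ j : Fin m, i' j = i j) ∨
        ∃ j : Fin m, (∀ l : Fin m, l < j → i' l = i l) ∧ i' j < i j) := by
  classical
  set t : Fin m → ℕ := fun c => (i c : ℕ) - (σ c : ℕ) with ht
  have htn : ∀ c, t c ≤ n := fun c => by have := (hv c).2; simp only [ht]; omega
  set π := Tuple.sort t with hπdef
  set s : Fin m → ℕ := fun j => t (π j) with hs
  have hsmono : Monotone s := Tuple.monotone_sort t
  have hsn : ∀ j, s j ≤ n := fun j => htn (π j)
  set i' : Fin m → Fin (m + n) := fun j => ⟨(j : ℕ) + s j, by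
    have := j.2; have := hsn j; omega⟩ with hi'
  have hval : ∀ j, (i' j : ℕ) = (j : ℕ) + s j := fun j => rfl
  have hmono : StrictMono i' := by
    intro a b hab
    have h1 : (a : ℕ) < (b : ℕ) := hab
    have h2 : s a ≤ s b := hsmono (le_of_lt hab)
    rw [Fin.lt_def, hval, hval]
    omega
  have hF : ∀ c : Fin m, t c ≤ n := htn
  set F : Fin m → Fin (n + 1) := fun c => ⟨t c, Nat.lt_succ_of_le (htn c)⟩ with hFdef
  have hDv : Dv i σ = ∑ c : Fin m, Finsupp.single (F c) 1 := by
    rw [Dv]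
    exact Finset.sum_congr rfl fun c _ => dif_pos (htn c)
  have hmI : mIdx n m i' = ∑ j : Fin m, Finsupp.single (F (π j)) 1 := by
    rw [mIdx]
    refine Finset.sum_congr rfl fun j _ => ?_
    have hcond : (i' j : ℕ) - (j : ℕ) ≤ n := by rw [hval]; have := hsn j; omega
    rw [dif_pos hcond]
    congr 1
    apply Fin.ext
    show (i' j : ℕ) - (j : ℕ) = t (π j)
    rw [hval]
    simp only [hs]
    omega
  have hDmI : Dv i σ = mIdx n m i' := by
    rw [hDv, hmI]
    exact (Equiv.sum_comp π (fun c => Finsupp.single (F c) 1)).symm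
  have key : ∀ j : Fin m, (∀ l : Fin m, l < j → i' l = i l) → (i' j : ℕ) ≤ (i j : ℕ) := by
    intro j hj
    have hk1 : (j : ℕ) + 1 ≤ m := j.2
    have hπ' : ∀ c, t c = s (π.symm c) := fun c => by
      simp only [hs]
      rw [Equiv.apply_symm_apply]
    have hA := prefix_le t s hsmono π.symm hπ' ((j : ℕ) + 1) hk1
    have hB := sigma_prefix_ge σ ((j : ℕ) + 1) hk1
    have hC := sum_t_sigma hv ((j : ℕ) + 1) hk1
    have hA' : (∑ c ∈ univ.filter (fun l : Fin m => (l : ℕ) < (j : ℕ) + 1), s c) ≤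
        ∑ c ∈ univ.filter (fun l : Fin m => (l : ℕ) < (j : ℕ) + 1), ((i c : ℕ) - (σ c : ℕ)) := hA
    have hC' : (∑ c ∈ univ.filter (fun l : Fin m => (l : ℕ) < (j : ℕ) + 1), ((i c : ℕ) - (σ c : ℕ)))
        + (∑ c ∈ univ.filter (fun l : Fin m => (l : ℕ) < (j : ℕ) + 1), ((σ c : ℕ)))
        = ∑ c ∈ univ.filter (fun l : Fin m => (l : ℕ) < (j : ℕ) + 1), (i c : ℕ) := by
      rw [← Finset.sum_add_distrib]
      exact hC
    have hsum : (∑ c ∈ univ.filter (fun l : Fin m => (l : ℕ) < (j : ℕ) + 1), ((c : ℕ) + s c)) ≤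
        ∑ c ∈ univ.filter (fun l : Fin m => (l : ℕ) < (j : ℕ) + 1), (i c : ℕ) := by
      rw [Finset.sum_add_distrib]
      omega
    have hnotmem : j ∉ univ.filter (fun l : Fin m => (l : ℕ) < (j : ℕ)) := by simp
    rw [filt_succ j, Finset.sum_insert hnotmem, Finset.sum_insert hnotmem] at hsum
    have heq : (∑ c ∈ univ.filter (fun l : Fin m => (l : ℕ) < (j : ℕ)), ((c : ℕ) + s c)) =
        ∑ c ∈ univ.filter (fun l : Fin m => (l : ℕ) < (j : ℕ)), (i c : ℕ) := by
      refine Finset.sum_congr rfl fun c hc => ?_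
      have hcj : c < j := by
        simp only [mem_filter, mem_univ, true_and] at hc
        exact hc
      have := hj c hcj
      have h2 : (i' c : ℕ) = (i c : ℕ) := congrArg Fin.val this
      rw [hval] at h2
      omega
    rw [hval]
    omega
  refine ⟨i', hmono, hDmI, ?_⟩
  by_cases hall : ∀ j : Fin m, i' j = i j
  · exact Or.inl hall
  · right
    push_neg at hall
    obtain ⟨j₀, hj₀⟩ := hall
    set S := univ.filter (fun j : Fin m => i' j ≠ i j) with hS
    have hSne : S.Nonempty := ⟨j₀, by simp [hS, hj₀]⟩
    set j₁ := S.min' hSne with hj₁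
    have hmem : i' j₁ ≠ i j₁ := by
      have := S.min'_mem hSne
      simp only [hS, mem_filter, mem_univ, true_and] at this
      exact this
    have hlt : ∀ l : Fin m, l < j₁ → i' l = i l := by
      intro l hl
      by_contra hne
      have h2 : j₁ ≤ l := S.min'_le l (by simp [hS, hne])
      exact absurd (lt_of_lt_of_le hl h2) (lt_irrefl _)
    refine ⟨j₁, hlt, ?_⟩
    have h3 := key j₁ hlt
    rw [Fin.lt_def]
    have h4 : (i' j₁ : ℕ) ≠ (i j₁ : ℕ) := fun hh => hmem (Fin.ext hh)
    omega

end Stmt2Aux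
namespace Stmt2Aux

lemma sum_mIdx {n m : ℕ} {i : Fin m → Fin (m + n)} (hi : StrictMono i) :
    (∑ s : Fin (n + 1), (mIdx n m i) s) = m := by
  have hgn : ∀ c : Fin m, (i c : ℕ) - (c : ℕ) ≤ n := fun c => by have := ub hi c; omega
  have hmI : mIdx n m i = ∑ c : Fin m,
      Finsupp.single (⟨(i c : ℕ) - (c : ℕ), Nat.lt_succ_of_le (hgn c)⟩ : Fin (n + 1)) 1 := by
    rw [mIdx]
    exact Finset.sum_congr rfl fun c _ => dif_pos (hgn c)
  rw [hmI]
  have h1 : ∀ v : Fin (n + 1), (∑ c : Fin m,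
      Finsupp.single (⟨(i c : ℕ) - (c : ℕ), Nat.lt_succ_of_le (hgn c)⟩ : Fin (n + 1)) 1) v =
      ∑ c : Fin m, (Finsupp.single
        (⟨(i c : ℕ) - (c : ℕ), Nat.lt_succ_of_le (hgn c)⟩ : Fin (n + 1)) (1 : ℕ)) v :=
    fun v => Finset.sum_apply' v
  calc (∑ v : Fin (n + 1), (∑ c : Fin m,
        Finsupp.single (⟨(i c : ℕ) - (c : ℕ), Nat.lt_succ_of_le (hgn c)⟩ : Fin (n + 1)) 1) v)
      = ∑ v : Fin (n + 1), ∑ c : Fin m, (Finsupp.single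
        (⟨(i c : ℕ) - (c : ℕ), Nat.lt_succ_of_le (hgn c)⟩ : Fin (n + 1)) (1 : ℕ)) v :=
        Finset.sum_congr rfl fun v _ => h1 v
    _ = ∑ c : Fin m, ∑ v : Fin (n + 1), (Finsupp.single
        (⟨(i c : ℕ) - (c : ℕ), Nat.lt_succ_of_le (hgn c)⟩ : Fin (n + 1)) (1 : ℕ)) v :=
        Finset.sum_comm
    _ = ∑ _c : Fin m, 1 := Finset.sum_congr rfl fun c _ => by
        simp [Finsupp.single_apply]
    _ = m := by simp

end Stmt2Aux
open Stmt2Aux in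

open Classical in
theorem stmt2 (A : ℕ → ℕ → ℂ) (n m : ℕ) (hm : 1 ≤ m)
    (i : Fin m → Fin (m + n)) (hi : StrictMono i) :
    (PIA A n m i).coeff (mIdx n m i) = (-1 : ℂ) ^ m ∧
      ∀ d : Fin (n + 1) →₀ ℕ, (∑ s : Fin (n + 1), d s) = m → (PIA A n m i).coeff d ≠ 0 →
        ∃ i' : Fin m → Fin (m + n), StrictMono i' ∧ d = mIdx n m i' ∧
          ((∀ j : Fin m, i' j = i j) ∨
            ∃ j : Fin m, (∀ l : Fin m, l < j → i' l = i l) ∧ i' j < i j) := by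
  constructor
  · rw [coeff_PIA A n m i _ (sum_mIdx hi)]
    have hcong : ∀ σ ∈ (Finset.univ : Finset (Equiv.Perm (Fin m))),
        (if Vld i σ ∧ mIdx n m i = Dv i σ then
          ((Equiv.Perm.sign σ : ℤ) : ℂ) * (-1 : ℂ) ^ m else 0) =
        if σ = 1 then ((Equiv.Perm.sign σ : ℤ) : ℂ) * (-1 : ℂ) ^ m else 0 :=
      fun σ _ => if_congr (cond_iff hi σ) rfl rfl
    rw [Finset.sum_congr rfl hcong, Finset.sum_ite_eq' Finset.univ 1
      (fun σ => ((Equiv.Perm.sign σ : ℤ) : ℂ) * (-1 : ℂ) ^ m)]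
    simp
  · intro d hd hne
    rw [coeff_PIA A n m i d hd] at hne
    have hex : ∃ σ : Equiv.Perm (Fin m), Vld i σ ∧ d = Dv i σ := by
      by_contra h
      push_neg at h
      exact hne (Finset.sum_eq_zero fun σ _ => if_neg (by
        intro hc
        exact (h σ hc.1) hc.2))
    obtain ⟨σ, hv, hdd⟩ := hex
    obtain ⟨i', h1, h2, h3⟩ := exists_i' hv
    exact ⟨i', h1, by rw [hdd, ← h2], h3⟩
end

section
/- Let A = (a_{ij})_{i,j≥1} be an arbitrary infinite complex matrix, n ≥ 0 and m ≥ 1. Then the binomial(m+n, m) polynomials P^I_A ∈ ℂ[x_0,…,x_n], as I ranges over all m-element subsets of {1,…,m+n}, are linearly independent over ℂ. -/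
open MvPolynomial Finset

namespace MvPolynomial

variable {σ R : Type*}

section CommSemiring

variable [CommSemiring R]

attribute [local instance] MvPolynomial.gradedAlgebra in
theorem IsHomogeneous.homogeneousComponent_mul {g : MvPolynomial σ R} {i : ℕ}
    (hg : g.IsHomogeneous i) (p : MvPolynomial σ R) {k : ℕ} (hik : i ≤ k) :
    homogeneousComponent k (g * p) = g * homogeneousComponent (k - i) p := by
  rw [← decomposition.decompose'_apply, ← decomposition.decompose'_apply]
  exact DirectSum.coe_decompose_mul_of_left_mem_of_le _
    ((mem_homogeneousSubmodule _ _).mpr hg) hik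

theorem homogeneousComponent_prod_C_add {ι : Type*} (a : ι → R) {g : ι → MvPolynomial σ R}
    {s : Finset ι} (hg : ∀ i ∈ s, (g i).IsHomogeneous 1) {k : ℕ} (hk : #s ≤ k) :
    homogeneousComponent k (∏ i ∈ s, (C (a i) + g i)) = if k = #s then ∏ i ∈ s, g i else 0 := by
  classical
  induction s using Finset.induction_on generalizing k with
  | empty =>
    simp only [card_empty, prod_empty]
    exact homogeneousComponent_of_mem
      ((mem_homogeneousSubmodule _ _).mpr (isHomogeneous_one σ R))
  | insert c s hc ih =>
    rw [card_insert_of_notMem hc] at hk ⊢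
    have hg' : ∀ i ∈ s, (g i).IsHomogeneous 1 := fun i hi => hg i (mem_insert_of_mem hi)
    rw [prod_insert hc, prod_insert hc, add_mul, map_add, homogeneousComponent_C_mul,
      ih hg' (by omega), if_neg (by omega), mul_zero, zero_add,
      (hg c (mem_insert_self c s)).homogeneousComponent_mul _ (by omega), ih hg' (by omega)]
    by_cases hks : k = #s + 1
    · simp [hks]
    · rw [if_neg (by omega), if_neg hks, mul_zero]

end CommSemiring

theorem homogeneousComponent_det_map_C_add [CommRing R] {ι : Type*} [Fintype ι] [DecidableEq ι]
    (a : Matrix ι ι R) {G : Matrix ι ι (MvPolynomial σ R)}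
    (hG : ∀ i j, (G i j).IsHomogeneous 1) :
    homogeneousComponent (Fintype.card ι) (a.map C + G).det = G.det := by
  simp only [Matrix.det_apply, map_sum, Units.smul_def, map_zsmul, Matrix.add_apply,
    Matrix.map_apply]
  refine sum_congr rfl fun τ _ => ?_
  rw [← card_univ, homogeneousComponent_prod_C_add (fun i => a (τ i) i)
    (g := fun i => G (τ i) i) (fun i _ => hG _ i) le_rfl, if_pos rfl]

theorem linearIndependent_of_lead_exponent [CommRing R] [NoZeroDivisors R] {ι α : Type*}
    [LinearOrder α] {v : ι → MvPolynomial σ R} {lead : ι → σ →₀ ℕ}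
    (hlead : Function.Injective lead) (w : (σ →₀ ℕ) → α)
    (hcoeff : ∀ i, coeff (lead i) (v i) ≠ 0)
    (hsupp : ∀ i, ∀ μ ∈ (v i).support, μ = lead i ∨ w (lead i) < w μ) :
    LinearIndependent R v := by
  classical
  rw [linearIndependent_iff']
  intro s g hsum i₀ hi₀
  by_contra hg₀
  obtain ⟨i, hi, hmin⟩ := (s.filter (g · ≠ 0)).exists_min_image (w ∘ lead)
    ⟨i₀, mem_filter.mpr ⟨hi₀, hg₀⟩⟩
  obtain ⟨his, hgi⟩ := mem_filter.mp hi
  have hcoeff_sum := congrArg (coeff (lead i)) hsum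
  rw [coeff_sum, coeff_zero, sum_eq_single_of_mem i his] at hcoeff_sum
  · exact mul_ne_zero hgi (hcoeff i) (by simpa using hcoeff_sum)
  intro j hjs hji
  by_cases hgj : g j = 0
  · simp [hgj]
  have hnot : lead i ∉ (v j).support := fun hmem => (hsupp j _ hmem).elim
    (fun h => hji (hlead h).symm) (hmin j (mem_filter.mpr ⟨hjs, hgj⟩)).not_gt
  rw [coeff_smul, notMem_support_iff.mp hnot, smul_zero]

end MvPolynomial

theorem Equiv.Perm.sum_sq_sub_lt_sum_sq_sub_comp {ι R : Type*} [LinearOrder ι] [Fintype ι]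
    [CommRing R] [LinearOrder R] [IsStrictOrderedRing R] {f g : ι → R}
    (hf : StrictMono f) (hg : StrictMono g) {τ : Equiv.Perm ι} (hτ : τ ≠ 1) :
    ∑ i, (f i - g i) ^ 2 < ∑ i, (f i - g (τ i)) ^ 2 := by
  have hnot : ¬Monovary f (g ∘ τ) := by
    intro hmon
    have hτmono : StrictMono τ := fun a b hab => by
      by_contra hba
      have hlt : τ b < τ a := lt_of_le_of_ne (not_lt.mp hba) (τ.injective.ne hab.ne')
      exact hab.not_ge (hf.le_iff_le.mp (hmon (hg hlt)))
    exact hτ (Equiv.ext fun i => congrFun ((hτmono.range_inj strictMono_id).mp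
      (by simp [Set.range_id])) i)
  have hlt := (hf.monotone.monovary hg.monotone).sum_mul_comp_perm_lt_sum_mul_iff.mpr hnot
  have hsq : ∑ i, g (τ i) ^ 2 = ∑ i, g i ^ 2 := Equiv.sum_comp τ (g · ^ 2)
  have hexpand : ∀ h : ι → R, ∑ i, (f i - h i) ^ 2 =
      ∑ i, f i ^ 2 - 2 * ∑ i, f i * h i + ∑ i, h i ^ 2 := fun h => by
    simp only [sub_sq, sum_add_distrib, sum_sub_distrib, mul_sum]
    ring_nf
  rw [hexpand g, hexpand fun i => g (τ i), hsq]
  linarith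

theorem Finsupp.eq_of_sum_single_eq_of_monotone {α : Type*} [PartialOrder α] {m : ℕ}
    {d e : Fin m → α} (hd : Monotone d) (he : Monotone e)
    (h : ∑ c, Finsupp.single (d c) 1 = ∑ c, Finsupp.single (e c) 1) : d = e := by
  have key : ∀ f : Fin m → α, toMultiset (∑ c, single (f c) 1) = ↑(List.ofFn f) := by
    intro f
    simp only [map_sum, toMultiset_single, one_smul]
    rw [← Fin.univ_val_map, ← Multiset.sum_map_singleton (univ.val.map f), Multiset.map_map]
    rfl
  have hperm := Multiset.coe_eq_coe.mp ((key d).symm.trans ((congrArg _ h).trans (key e)))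
  exact List.ofFn_injective (hperm.eq_of_sortedLE (List.sortedLE_ofFn_iff.mpr hd)
    (List.sortedLE_ofFn_iff.mpr he))

theorem StrictMono.val_add_sub_le {m k : ℕ} {j : Fin m → Fin k} (hj : StrictMono j)
    {a b : Fin m} (hab : a ≤ b) : (j a : ℕ) + (b - a) ≤ j b := by
  have hcard : #(Icc a b) ≤ #(Icc (j a) (j b)) :=
    card_le_card_of_injOn j (fun x hx => by
      simp only [coe_Icc, Set.mem_Icc] at hx ⊢
      exact ⟨hj.monotone hx.1, hj.monotone hx.2⟩) hj.injective.injOn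
  rw [Fin.card_Icc, Fin.card_Icc] at hcard
  have : (a : ℕ) ≤ b := hab
  have : (j a : ℕ) ≤ j b := hj.monotone hab
  omega

namespace PIA

variable {R : Type*} [CommRing R] {n m : ℕ}

def Admissible (n : ℕ) (j : Fin m → Fin (m + n)) (τ : Equiv.Perm (Fin m)) : Prop :=
  ∀ c, (τ c : ℕ) ≤ j c ∧ (j c : ℕ) ≤ τ c + n

theorem admissible_one {j : Fin m → Fin (m + n)} (hj : StrictMono j) : Admissible n j 1 := by
  intro c
  have hc := c.2
  have hlow := hj.val_add_sub_le (a := ⟨0, by omega⟩) (b := c) (Nat.zero_le _)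
  have hup := hj.val_add_sub_le (a := c) (b := ⟨m - 1, by omega⟩) (Fin.mk_le_mk.mpr (by omega))
  have := (j ⟨m - 1, by omega⟩).2
  simp only [Equiv.Perm.one_apply] at hlow hup ⊢
  omega

noncomputable def bandMatrix (R : Type*) [CommRing R] (n : ℕ) (j : Fin m → Fin (m + n)) :
    Matrix (Fin m) (Fin m) (MvPolynomial (Fin (n + 1)) R) :=
  Matrix.of fun r c =>
    if h : (r : ℕ) ≤ j c ∧ (j c : ℕ) ≤ r + n then X ⟨j c - r, by omega⟩ else 0

theorem eq_det (A : ℕ → ℕ → ℂ) (j : Fin m → Fin (m + n)) :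
    PIA A n m j = ((Matrix.of fun r c : Fin m => A r (j c)).map C - bandMatrix ℂ n j).det :=
  rfl

theorem homogeneousComponent_eq (A : ℕ → ℕ → ℂ) (j : Fin m → Fin (m + n)) :
    homogeneousComponent m (PIA A n m j) = (-1 : ℂˣ) ^ m • (bandMatrix ℂ n j).det := by
  have hband : ∀ r c, (bandMatrix ℂ n j r c).IsHomogeneous 1 := fun r c => by
    simp only [bandMatrix, Matrix.of_apply]
    split
    · exact isHomogeneous_X _ _
    · exact isHomogeneous_zero _ _ _
  have h := homogeneousComponent_det_map_C_add (Matrix.of fun r c : Fin m => A r (j c))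
    (G := -bandMatrix ℂ n j) fun r c => (hband r c).neg
  rw [Fintype.card_fin, ← sub_eq_add_neg, ← eq_det] at h
  rw [h, Matrix.det_neg, Fintype.card_fin, Units.smul_def, smul_eq_C_mul]
  simp

noncomputable def bandExponent (j : Fin m → Fin (m + n)) (τ : Equiv.Perm (Fin m))
    (h : Admissible n j τ) : Fin (n + 1) →₀ ℕ :=
  ∑ c, Finsupp.single ⟨j c - τ c, by have := (h c).2; omega⟩ 1

theorem prod_bandMatrix_of_admissible {j : Fin m → Fin (m + n)} {τ : Equiv.Perm (Fin m)}
    (h : Admissible n j τ) :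
    ∏ c, bandMatrix R n j (τ c) c = monomial (bandExponent j τ h) 1 := by
  simp only [bandMatrix, Matrix.of_apply, dif_pos (h _), bandExponent, monomial_sum_one]
  rfl

theorem prod_bandMatrix_of_not_admissible {j : Fin m → Fin (m + n)} {τ : Equiv.Perm (Fin m)}
    (h : ¬Admissible n j τ) : ∏ c, bandMatrix R n j (τ c) c = 0 := by
  obtain ⟨c, hc⟩ := not_forall.mp h
  exact prod_eq_zero (mem_univ c) (by simp [bandMatrix, hc])

theorem exists_eq_bandExponent_of_mem_support {j : Fin m → Fin (m + n)} {τ : Equiv.Perm (Fin m)}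
    {μ : Fin (n + 1) →₀ ℕ} (hμ : μ ∈ (∏ c, bandMatrix R n j (τ c) c).support) :
    ∃ h : Admissible n j τ, μ = bandExponent j τ h := by
  by_cases h : Admissible n j τ
  · rw [prod_bandMatrix_of_admissible h] at hμ
    exact ⟨h, Finset.mem_singleton.mp (support_monomial_subset hμ)⟩
  · simp [prod_bandMatrix_of_not_admissible h] at hμ

noncomputable def energy (n : ℕ) : (Fin (n + 1) →₀ ℕ) →+ ℤ :=
  Finsupp.weight fun d : Fin (n + 1) => ((d : ℕ) : ℤ) ^ 2

theorem energy_bandExponent {j : Fin m → Fin (m + n)} {τ : Equiv.Perm (Fin m)}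
    (h : Admissible n j τ) :
    energy n (bandExponent j τ h) = ∑ c, ((j c : ℤ) - (τ c : ℕ)) ^ 2 := by
  simp only [energy, bandExponent, map_sum, Finsupp.weight_single, one_smul]
  refine sum_congr rfl fun c _ => ?_
  rw [Nat.cast_sub (h c).1]

theorem energy_bandExponent_one_lt {j : Fin m → Fin (m + n)} (hj : StrictMono j)
    {τ : Equiv.Perm (Fin m)} (hτ : τ ≠ 1) (h : Admissible n j τ) :
    energy n (bandExponent j 1 (admissible_one hj)) < energy n (bandExponent j τ h) := by
  rw [energy_bandExponent, energy_bandExponent]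
  exact Equiv.Perm.sum_sq_sub_lt_sum_sq_sub_comp (f := fun c => ((j c : ℕ) : ℤ))
    (g := fun c => ((c : ℕ) : ℤ)) (fun a b hab => by simpa using hj hab)
    (fun a b hab => by simpa using hab) hτ

theorem mem_support_det_bandMatrix {j : Fin m → Fin (m + n)} (hj : StrictMono j)
    {μ : Fin (n + 1) →₀ ℕ} (hμ : μ ∈ (bandMatrix R n j).det.support) :
    μ = bandExponent j 1 (admissible_one hj) ∨
      energy n (bandExponent j 1 (admissible_one hj)) < energy n μ := by
  classical
  rw [Matrix.det_apply] at hμ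
  obtain ⟨τ, -, hτ⟩ := mem_biUnion.mp (support_sum hμ)
  obtain ⟨h, rfl⟩ := exists_eq_bandExponent_of_mem_support (support_smul hτ)
  by_cases h1 : τ = 1
  · subst h1
    exact Or.inl rfl
  · exact Or.inr (energy_bandExponent_one_lt hj h1 h)

theorem coeff_det_bandMatrix {j : Fin m → Fin (m + n)} (hj : StrictMono j) :
    coeff (bandExponent j 1 (admissible_one hj)) (bandMatrix R n j).det = 1 := by
  rw [Matrix.det_apply, coeff_sum, sum_eq_single_of_mem 1 (mem_univ _)]
  · rw [Equiv.Perm.sign_one, one_smul, prod_bandMatrix_of_admissible (admissible_one hj),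
      coeff_monomial, if_pos rfl]
  · intro τ _ hτ
    have hnot :
        bandExponent j 1 (admissible_one hj) ∉ (∏ c, bandMatrix R n j (τ c) c).support := by
      intro hmem
      obtain ⟨h, heq⟩ := exists_eq_bandExponent_of_mem_support hmem
      exact (energy_bandExponent_one_lt hj hτ h).ne (congrArg _ heq)
    rw [coeff_smul, notMem_support_iff.mp hnot, smul_zero]

def shape {j : Fin m → Fin (m + n)} (hj : StrictMono j) (c : Fin m) : Fin (n + 1) :=
  ⟨j c - c, by have := (admissible_one hj c).2; simp only [Equiv.Perm.one_apply] at this; omega⟩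

theorem monotone_shape {j : Fin m → Fin (m + n)} (hj : StrictMono j) : Monotone (shape hj) :=
  fun a b hab => by
    have := hj.val_add_sub_le hab
    have : (a : ℕ) ≤ b := hab
    simp only [shape, Fin.mk_le_mk]
    omega

theorem bandExponent_one_injective :
    Function.Injective fun J : {j : Fin m → Fin (m + n) // StrictMono j} =>
      bandExponent J.1 1 (admissible_one J.2) := by
  rintro ⟨i, hi⟩ ⟨j, hj⟩ h
  have hshape := Finsupp.eq_of_sum_single_eq_of_monotone (monotone_shape hi) (monotone_shape hj) h
  refine Subtype.ext (funext fun c => Fin.ext ?_)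
  have hc := congrArg Fin.val (congrFun hshape c)
  have := (admissible_one hi c).1
  have := (admissible_one hj c).1
  simp only [shape, Equiv.Perm.one_apply] at *
  omega

theorem linearIndependent_det_bandMatrix [NoZeroDivisors R] [Nontrivial R] :
    LinearIndependent R fun J : {j : Fin m → Fin (m + n) // StrictMono j} =>
      (bandMatrix R n J.1).det :=
  linearIndependent_of_lead_exponent bandExponent_one_injective (energy n)
    (fun J => by rw [coeff_det_bandMatrix J.2]; exact one_ne_zero)
    (fun J _ hμ => mem_support_det_bandMatrix J.2 hμ)

end PIA

theorem stmt3_general (A : ℕ → ℕ → ℂ) (n m : ℕ) :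
    LinearIndependent ℂ
      (fun I : {i : Fin m → Fin (m + n) // StrictMono i} => PIA A n m I.1) := by
  have h : LinearIndependent ℂ fun I : {i : Fin m → Fin (m + n) // StrictMono i} =>
      (-1 : ℂˣ) ^ m • (PIA.bandMatrix ℂ n I.1).det :=
    PIA.linearIndependent_det_bandMatrix.units_smul _
  refine LinearIndependent.of_comp (homogeneousComponent m) ?_
  simpa only [Function.comp_def, PIA.homogeneousComponent_eq] using h

theorem stmt3 (A : ℕ → ℕ → ℂ) (n m : ℕ) (hm : 1 ≤ m) :
    LinearIndependent ℂ
      (fun I : {i : Fin m → Fin (m + n) // StrictMono i} => PIA A n m I.1) :=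
  stmt3_general A n m
end

section
/- Let A = (a_{ij})_{i,j≥1} be an arbitrary infinite complex matrix and n ≥ 0. Then the totality of the polynomials P^I_A, as m ranges over all nonnegative integers and I over all m-element subsets of {1,…,m+n} (with the empty index set for m = 0 contributing the constant polynomial 1), is a linear basis of ℂ[x_0,…,x_n] as a ℂ-vector space. -/
open Finset Equiv MvPolynomial Finsupp

section Triangular

variable {ι κ R M : Type*} [Ring R] [AddCommGroup M] [Module R M]

theorem Module.Basis.linearIndependent_of_triangular {α : Type*} [LinearOrder α]
    (b : Basis κ R M) {f : ι → M} {e : ι → κ} (he : Function.Injective e) (key : κ → α)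
    (hdiag : ∀ i, IsUnit (b.repr (f i) (e i)))
    (hlt : ∀ i k, k ≠ e i → b.repr (f i) k ≠ 0 → key k < key (e i)) :
    LinearIndependent R f := by
  classical
  rw [linearIndependent_iff]
  intro l hl
  by_contra hne
  obtain ⟨i₀, hi₀, hmax⟩ := l.support.exists_max_image (key ∘ e)
    (Finsupp.support_nonempty_iff.mpr hne)
  have hcoeff : ∑ i ∈ l.support, l i * b.repr (f i) (e i₀) = 0 := by
    simpa [Finsupp.linearCombination_apply, Finsupp.sum, Finsupp.finsetSum_apply] using
      congr($(congrArg b.repr hl) (e i₀))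
  rw [Finset.sum_eq_single i₀ (fun i hi hne => ?_) (fun h => absurd hi₀ h)] at hcoeff
  · exact Finsupp.mem_support_iff.mp hi₀ ((hdiag i₀).mul_left_eq_zero.mp hcoeff)
  · by_contra h
    exact (hmax i hi).not_gt (hlt i (e i₀) (he.ne hne.symm) (right_ne_zero_of_mul h))

theorem Module.Basis.span_eq_top_of_triangular {α : Type*} [Preorder α] [WellFoundedLT α]
    (b : Basis κ R M) {f : ι → M} {e : ι → κ} (he : Function.Surjective e) (key : κ → α)
    (hdiag : ∀ i, IsUnit (b.repr (f i) (e i)))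
    (hlt : ∀ i k, k ≠ e i → b.repr (f i) k ≠ 0 → key k < key (e i)) :
    Submodule.span R (Set.range f) = ⊤ := by
  classical
  suffices h : ∀ k, b k ∈ Submodule.span R (Set.range f) by
    rw [eq_top_iff, ← b.span_eq, Submodule.span_le]
    rintro _ ⟨k, rfl⟩
    exact h k
  intro k
  induction k using (InvImage.wf key wellFounded_lt).induction with
  | _ k ih =>
  obtain ⟨i, rfl⟩ := he k
  have hrest : linearCombination R b ((b.repr (f i)).erase (e i)) ∈
      Submodule.span R (Set.range f) := by
    rw [linearCombination_apply]
    refine Submodule.sum_mem _ fun k hk => Submodule.smul_mem _ _ (ih k ?_)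
    rw [support_erase, mem_erase, Finsupp.mem_support_iff] at hk
    exact hlt i k hk.1 hk.2
  have hsplit : f i = b.repr (f i) (e i) • b (e i) +
      linearCombination R b ((b.repr (f i)).erase (e i)) := by
    conv_lhs => rw [← b.linearCombination_repr (f i), ← single_add_erase (e i) (b.repr (f i))]
    rw [map_add, linearCombination_single]
  rw [← Submodule.smul_mem_iff' _ (hdiag i).unit, Units.smul_def, IsUnit.unit_spec,
    eq_sub_of_add_eq hsplit.symm]
  exact Submodule.sub_mem _ (Submodule.subset_span ⟨i, rfl⟩) hrest

end Triangular

theorem Finsupp.degree_sum_single_one {α : Type*} {m : ℕ} (f : Fin m → α) :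
    degree (∑ c, single (f c) 1) = m := by
  simp [map_sum, degree_single]

theorem Finsupp.toMultiset_sum_single_one {α : Type*} {m : ℕ} (f : Fin m → α) :
    toMultiset (∑ c, single (f c) 1) = ↑(List.ofFn f) := by
  simp only [map_sum, toMultiset_single, one_nsmul]
  rw [Finset.sum, ← Fin.univ_val_map, ← Multiset.sum_map_singleton (Multiset.map f _),
    Multiset.map_map]
  rfl

theorem Monotone.eq_of_sum_single_eq {α : Type*} [LinearOrder α] {m : ℕ} {f g : Fin m → α}
    (hf : Monotone f) (hg : Monotone g) (h : ∑ c, single (f c) 1 = ∑ c, single (g c) 1) :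
    f = g := by
  have hperm : (List.ofFn f).Perm (List.ofFn g) := by
    rw [← Multiset.coe_eq_coe, ← toMultiset_sum_single_one, ← toMultiset_sum_single_one, h]
  exact List.ofFn_injective (hperm.eq_of_sortedLE hf.sortedLE_ofFn hg.sortedLE_ofFn)

theorem Finsupp.exists_monotone_sum_single_eq_s4 {α : Type*} [LinearOrder α] (μ : α →₀ ℕ) :
    ∃ (m : ℕ) (f : Fin m → α), Monotone f ∧ ∑ c, single (f c) 1 = μ := by
  classical
  set l := (toMultiset μ).sort
  refine ⟨l.length, l.get, (Multiset.pairwise_sort _ _).sortedLE.monotone_get,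
    Function.LeftInverse.injective toMultiset_toFinsupp ?_⟩
  rw [toMultiset_sum_single_one, List.ofFn_get, Multiset.sort_eq]

theorem StrictMono.add_le_add_of_le {m : ℕ} {f : Fin m → ℕ} (hf : StrictMono f) {a b : Fin m}
    (hab : a ≤ b) : (b : ℕ) + f a ≤ a + f b := by
  obtain ⟨k, hk⟩ := Nat.exists_eq_add_of_le (Fin.le_def.mp hab)
  induction k generalizing b with
  | zero => simp [Fin.ext hk]
  | succ k ih =>
    have hprev : (a : ℕ) + k < m := by omega
    have : (a + k : ℕ) + f a ≤ a + f ⟨a + k, hprev⟩ :=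
      ih (b := ⟨a + k, hprev⟩) (Fin.le_def.mpr (by simp)) rfl
    have := hf (show (⟨a + k, hprev⟩ : Fin m) < b from Fin.lt_def.mpr (by simp; omega))
    omega

theorem sum_sq_sub_lt_sum_sq_sub_perm_s4 {m : ℕ} {f : Fin m → ℤ} (hf : StrictMono f)
    {σ : Perm (Fin m)} (hσ : σ ≠ 1) :
    ∑ c, (f c - c) ^ 2 < ∑ c, (f c - σ c) ^ 2 := by
  let g : Fin m → ℤ := fun c => c
  have hsq : ∑ c, g (σ c) ^ 2 = ∑ c, g c ^ 2 := Equiv.sum_comp σ (g · ^ 2)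
  have hrearr : ∑ c, f c * g (σ c) < ∑ c, f c * g c := by
    refine (Monovary.sum_mul_comp_perm_lt_sum_mul_iff fun a b hab => ?_).mpr fun hmv => hσ ?_
    · exact hf.monotone (by simpa [g] using hab.le)
    · refine (Perm.monotone_iff σ).mp fun a b hab => not_lt.mp fun hba => ?_
      exact (hmv (by simpa [g] using hba)).not_gt
        (hf (lt_of_le_of_ne hab fun h => by simp [h] at hba))
  have expand : ∀ h : Fin m → ℤ,
      ∑ c, (f c - h c) ^ 2 = ∑ c, f c ^ 2 - 2 * ∑ c, f c * h c + ∑ c, h c ^ 2 := by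
    intro h
    simp only [sub_sq, sum_add_distrib, sum_sub_distrib, Finset.mul_sum]
    congr 2
    exact sum_congr rfl fun c _ => by ring
  have h₁ := expand g
  have h₂ := expand (g ∘ σ)
  simp only [Function.comp_apply, g] at hsq hrearr h₁ h₂
  linarith

theorem MvPolynomial.coeff_prod_C_sub_of_card_le {ι σ R : Type*} [CommRing R] {s : Finset ι}
    (a : ι → R) {q : ι → MvPolynomial σ R} (hq : ∀ c ∈ s, (q c).IsHomogeneous 1)
    {μ : σ →₀ ℕ} (hμ : #s ≤ μ.degree) :
    coeff μ (∏ c ∈ s, (C (a c) - q c)) = coeff μ (∏ c ∈ s, -q c) := by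
  classical
  simp_rw [sub_eq_neg_add]
  rw [prod_add, coeff_sum, Finset.sum_eq_single s]
  · simp
  · intro t ht hts
    have hts : t ⊂ s := (mem_powerset.mp ht).ssubset_of_ne hts
    have hhom : (∏ c ∈ t, -q c).IsHomogeneous #t := by
      simpa using IsHomogeneous.prod t _ (fun _ => 1) fun c hc => (hq c (hts.subset hc)).neg
    rw [← map_prod, mul_comm, coeff_C_mul, hhom.coeff_eq_zero ((card_lt_card hts).trans_le hμ).ne',
      mul_zero]
  · exact fun h => absurd (mem_powerset_self s) h

theorem MvPolynomial.coeff_det_C_sub_of_card_le {ι σ R : Type*} [Fintype ι] [DecidableEq ι]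
    [CommRing R] (a : ι → ι → R) {N : Matrix ι ι (MvPolynomial σ R)}
    (hN : ∀ r c, (N r c).IsHomogeneous 1) {μ : σ →₀ ℕ} (hμ : Fintype.card ι ≤ μ.degree) :
    coeff μ (Matrix.of fun r c => C (a r c) - N r c).det = coeff μ (-N).det := by
  simp only [Matrix.det_apply, coeff_sum, coeff_smul, Matrix.of_apply, Matrix.neg_apply]
  refine sum_congr rfl fun σ _ => ?_
  rw [coeff_prod_C_sub_of_card_le _ (fun c _ => hN _ _) (by simpa using hμ)]

namespace PIA

variable {m n : ℕ} {i : Fin m → Fin (m + n)}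

theorem le_apply_le_add (hi : StrictMono i) (c : Fin m) : (c : ℕ) ≤ i c ∧ (i c : ℕ) ≤ c + n := by
  have hmono := Fin.val_strictMono.comp hi
  have h₀ := hmono.add_le_add_of_le (Fin.le_def.mpr (Nat.zero_le c) : ⟨0, c.pos⟩ ≤ c)
  have hlast := hmono.add_le_add_of_le
    (Fin.le_def.mpr (Nat.le_sub_one_of_lt c.isLt) : c ≤ ⟨m - 1, by omega⟩)
  have := (i ⟨m - 1, by omega⟩).isLt
  simp only [Function.comp_apply] at h₀ hlast
  omega

/-- The diagonal entry of `A_I` in column `c` is `a_{c, i c} - x_{i c - c}`. -/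
def diagIndex (hi : StrictMono i) (c : Fin m) : Fin (n + 1) :=
  ⟨i c - c, by have := le_apply_le_add hi c; omega⟩

theorem monotone_diagIndex (hi : StrictMono i) : Monotone (diagIndex hi) := by
  intro a b hab
  have := (Fin.val_strictMono.comp hi).add_le_add_of_le hab
  simp only [diagIndex, Fin.mk_le_mk, Function.comp_apply] at this ⊢
  omega

noncomputable def diagExponent (hi : StrictMono i) : Fin (n + 1) →₀ ℕ :=
  ∑ c, single (diagIndex hi c) 1

theorem diagExponent_bijective :
    Function.Bijective fun p : Σ m : ℕ, {i : Fin m → Fin (m + n) // StrictMono i} =>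
      diagExponent p.2.2 := by
  constructor
  · rintro ⟨m, i, hi⟩ ⟨m', i', hi'⟩ h
    obtain rfl : m = m' := by
      simpa only [diagExponent, degree_sum_single_one] using congrArg degree h
    have hd := (monotone_diagIndex hi).eq_of_sum_single_eq (monotone_diagIndex hi') h
    obtain rfl : i = i' := funext fun c => Fin.ext <| by
      have h := congrArg Fin.val (congrFun hd c)
      have := le_apply_le_add hi c
      have := le_apply_le_add hi' c
      simp only [diagIndex] at h
      omega
    rfl
  · intro μ
    obtain ⟨m, d, hd, rfl⟩ := exists_monotone_sum_single_eq_s4 μ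
    have hi : StrictMono fun c : Fin m => (⟨c + d c, by omega⟩ : Fin (m + n)) :=
      fun a b hab => Fin.mk_lt_mk.mpr <| by
        have := Fin.le_def.mp (hd hab.le)
        have := Fin.lt_def.mp hab
        omega
    refine ⟨⟨m, _, hi⟩, sum_congr rfl fun c _ => ?_⟩
    congr
    ext
    simp [diagIndex]

/-- The matrix `∑_s x_s I_s` restricted to the first `m` rows and the columns `i`. -/
noncomputable def varMatrix (R : Type*) [CommRing R] (n m : ℕ) (i : Fin m → Fin (m + n)) :
    Matrix (Fin m) (Fin m) (MvPolynomial (Fin (n + 1)) R) :=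
  Matrix.of fun r c => if h : (r : ℕ) ≤ i c ∧ (i c : ℕ) ≤ r + n then X ⟨i c - r, by omega⟩ else 0

theorem eq_det_C_sub_varMatrix (A : ℕ → ℕ → ℂ) :
    PIA A n m i = (Matrix.of fun r c : Fin m => C (A r (i c)) - varMatrix ℂ n m i r c).det :=
  rfl

variable {R : Type*} [CommRing R]

def sqWeight (n : ℕ) (s : Fin (n + 1)) : ℕ := (s : ℕ) ^ 2

theorem weight_sqWeight_le (μ : Fin (n + 1) →₀ ℕ) :
    weight (sqWeight n) μ ≤ n ^ 2 * μ.degree := by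
  rw [weight_eq_sum, degree_eq_sum, Finset.mul_sum]
  refine sum_le_sum fun s _ => ?_
  rw [smul_eq_mul, mul_comm, sqWeight]
  gcongr
  exact Nat.lt_succ_iff.mp s.isLt

theorem weight_sqWeight_diagExponent (hi : StrictMono i) :
    weight (sqWeight n) (diagExponent hi) = ∑ c, ((i c : ℕ) - c) ^ 2 := by
  simp [diagExponent, map_sum, weight_single, sqWeight, diagIndex]

theorem isHomogeneous_varMatrix (r c : Fin m) : (varMatrix R n m i r c).IsHomogeneous 1 := by
  rw [varMatrix, Matrix.of_apply]
  split_ifs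
  exacts [isHomogeneous_X _ _, isHomogeneous_zero _ _ _]

theorem isWeightedHomogeneous_varMatrix (r c : Fin m) :
    IsWeightedHomogeneous (sqWeight n) (varMatrix R n m i r c) (((i c : ℕ) - r) ^ 2) := by
  rw [varMatrix, Matrix.of_apply]
  split_ifs
  exacts [isWeightedHomogeneous_X _ _ _, isWeightedHomogeneous_zero _ _ _]

theorem prod_varMatrix_diag (hi : StrictMono i) :
    ∏ c, varMatrix R n m i c c = monomial (diagExponent hi) 1 := by
  rw [diagExponent, monomial_sum_one]
  refine prod_congr rfl fun c _ => ?_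
  rw [varMatrix, Matrix.of_apply, dif_pos (le_apply_le_add hi c)]
  rfl

theorem le_of_prod_varMatrix_ne_zero {σ : Perm (Fin m)}
    (h : ∏ c, varMatrix R n m i (σ c) c ≠ 0) (c : Fin m) : (σ c : ℕ) ≤ i c := by
  by_contra hc
  refine h (prod_eq_zero (mem_univ c) ?_)
  rw [varMatrix, Matrix.of_apply, dif_neg (fun h => hc h.1)]

theorem degree_eq_and_weight_eq_of_coeff_prod_ne_zero {σ : Perm (Fin m)}
    {μ : Fin (n + 1) →₀ ℕ} (h : coeff μ (∏ c, varMatrix R n m i (σ c) c) ≠ 0) :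
    μ.degree = m ∧ weight (sqWeight n) μ = ∑ c, ((i c : ℕ) - σ c) ^ 2 := by
  constructor
  · have := IsHomogeneous.prod univ _ (fun _ => 1) (fun c _ => isHomogeneous_varMatrix (σ c) c) h
    simpa only [sum_const, card_univ, Fintype.card_fin, smul_eq_mul, mul_one,
      degree_eq_weight_one, Pi.one_def] using this
  · exact IsWeightedHomogeneous.prod univ _ _
      (fun c _ => isWeightedHomogeneous_varMatrix (σ c) c) h

theorem sum_sq_sub_lt_of_ne_one (hi : StrictMono i) {σ : Perm (Fin m)} (hσ : σ ≠ 1)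
    (hle : ∀ c, (σ c : ℕ) ≤ i c) :
    ∑ c, ((i c : ℕ) - c) ^ 2 < ∑ c, ((i c : ℕ) - σ c) ^ 2 := by
  have hmono : StrictMono fun c => ((i c : ℕ) : ℤ) := fun a b hab => Nat.cast_lt.mpr (hi hab)
  have := sum_sq_sub_lt_sum_sq_sub_perm_s4 hmono hσ
  zify [hle, fun c => (le_apply_le_add hi c).1]
  exact this

theorem degree_eq_and_weight_lt_of_coeff_prod_ne_zero (hi : StrictMono i) {σ : Perm (Fin m)}
    (hσ : σ ≠ 1) {μ : Fin (n + 1) →₀ ℕ} (h : coeff μ (∏ c, varMatrix R n m i (σ c) c) ≠ 0) :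
    μ.degree = m ∧ weight (sqWeight n) (diagExponent hi) < weight (sqWeight n) μ := by
  obtain ⟨hdeg, hw⟩ := degree_eq_and_weight_eq_of_coeff_prod_ne_zero h
  have hle := le_of_prod_varMatrix_ne_zero (fun h₀ => h (by rw [h₀, coeff_zero]))
  rw [hw, weight_sqWeight_diagExponent]
  exact ⟨hdeg, sum_sq_sub_lt_of_ne_one hi hσ hle⟩

theorem coeff_det_varMatrix_diagExponent (hi : StrictMono i) :
    coeff (diagExponent hi) (varMatrix R n m i).det = 1 := by
  rw [Matrix.det_apply, coeff_sum, Finset.sum_eq_single 1]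
  · simp [prod_varMatrix_diag hi]
  · intro σ _ hσ
    rw [coeff_smul]
    by_contra h
    exact (degree_eq_and_weight_lt_of_coeff_prod_ne_zero hi hσ
      (right_ne_zero_of_smul h)).2.false
  · simp

theorem degree_eq_and_weight_lt_of_coeff_det_ne_zero (hi : StrictMono i) {μ : Fin (n + 1) →₀ ℕ}
    (hne : μ ≠ diagExponent hi) (h : coeff μ (varMatrix R n m i).det ≠ 0) :
    μ.degree = m ∧ weight (sqWeight n) (diagExponent hi) < weight (sqWeight n) μ := by
  rw [Matrix.det_apply, coeff_sum] at h
  obtain ⟨σ, -, hσ⟩ := exists_ne_zero_of_sum_ne_zero h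
  rw [coeff_smul] at hσ
  rcases eq_or_ne σ 1 with rfl | hσ1
  · simp [prod_varMatrix_diag hi, coeff_monomial, hne.symm] at hσ
  · exact degree_eq_and_weight_lt_of_coeff_prod_ne_zero hi hσ1 (right_ne_zero_of_smul hσ)

theorem coeff_of_le_degree (A : ℕ → ℕ → ℂ) {μ : Fin (n + 1) →₀ ℕ} (hμ : m ≤ μ.degree) :
    coeff μ (PIA A n m i) = (-1) ^ m * coeff μ (varMatrix ℂ n m i).det := by
  rw [eq_det_C_sub_varMatrix,
    coeff_det_C_sub_of_card_le _ isHomogeneous_varMatrix (by simpa using hμ), Matrix.det_neg, Fintype.card_fin, ← map_one C, ← map_neg, ← map_pow, coeff_C_mul]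

theorem coeff_diagExponent (A : ℕ → ℕ → ℂ) (hi : StrictMono i) :
    coeff (diagExponent hi) (PIA A n m i) = (-1) ^ m := by
  rw [coeff_of_le_degree (μ := diagExponent hi) A (degree_sum_single_one _).ge,
    coeff_det_varMatrix_diagExponent, mul_one]

/-- Compares monomials by degree, then by decreasing `sqWeight` (the subtraction does not
truncate, by `weight_sqWeight_le`). -/
noncomputable def key (n : ℕ) (μ : Fin (n + 1) →₀ ℕ) : ℕ ×ₗ ℕ :=
  toLex (μ.degree, n ^ 2 * μ.degree - weight (sqWeight n) μ)

theorem key_lt_key_diagExponent (A : ℕ → ℕ → ℂ) (hi : StrictMono i)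
    {μ : Fin (n + 1) →₀ ℕ} (hne : μ ≠ diagExponent hi) (h : coeff μ (PIA A n m i) ≠ 0) :
    key n μ < key n (diagExponent hi) := by
  have hdeg : (diagExponent hi).degree = m := degree_sum_single_one _
  rw [key, key, Prod.Lex.toLex_lt_toLex, hdeg]
  rcases lt_or_ge μ.degree m with hlt | hge
  · exact Or.inl hlt
  rw [coeff_of_le_degree A hge] at h
  obtain ⟨hμ, hw⟩ := degree_eq_and_weight_lt_of_coeff_det_ne_zero hi hne (right_ne_zero_of_mul h)
  have h₁ := weight_sqWeight_le μ
  have h₂ := weight_sqWeight_le (diagExponent hi)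
  rw [hμ] at h₁
  rw [hdeg] at h₂
  exact Or.inr ⟨hμ, by dsimp only; rw [hμ]; omega⟩

end PIA

theorem stmt4 (A : ℕ → ℕ → ℂ) (n : ℕ) :
    LinearIndependent ℂ
      (fun p : Σ m : ℕ, {i : Fin m → Fin (m + n) // StrictMono i} => PIA A n p.1 p.2.1) ∧
    Submodule.span ℂ
      (Set.range
        (fun p : Σ m : ℕ, {i : Fin m → Fin (m + n) // StrictMono i} => PIA A n p.1 p.2.1)) =
      ⊤ := by
  let b := basisMonomials (Fin (n + 1)) ℂ
  have hdiag (p : Σ m : ℕ, {i : Fin m → Fin (m + n) // StrictMono i}) :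
      IsUnit (b.repr (PIA A n p.1 p.2.1) (PIA.diagExponent p.2.2)) := by
    change IsUnit (coeff (PIA.diagExponent p.2.2) (PIA A n p.1 p.2.1))
    rw [PIA.coeff_diagExponent]
    exact isUnit_neg_one.pow _
  have hlt (p : Σ m : ℕ, {i : Fin m → Fin (m + n) // StrictMono i}) μ
      (hne : μ ≠ PIA.diagExponent p.2.2) (h : b.repr (PIA A n p.1 p.2.1) μ ≠ 0) :
      PIA.key n μ < PIA.key n (PIA.diagExponent p.2.2) :=
    PIA.key_lt_key_diagExponent A p.2.2 hne h
  exact ⟨b.linearIndependent_of_triangular PIA.diagExponent_bijective.1 (PIA.key n) hdiag hlt,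
    b.span_eq_top_of_triangular PIA.diagExponent_bijective.2 (PIA.key n) hdiag hlt⟩
end

section
/- Let A = (a_{ij})_{i,j≥1} be an arbitrary infinite complex matrix, n ≥ 0 and m ≥ 1. Then the set E_A^{(m)} of common zeros in ℂ^{n+1} of all polynomials P^I_A with I ranging over the m-element subsets of {1,…,m+n} is a finite subset of ℂ^{n+1} with at most binomial(m+n, n+1) elements. -/
/-- The set `E_A^{(m)}` of common zeros in `ℂ^{n+1}` of all polynomials `P^I_A`,
with `I` ranging over the `m`-element subsets of the column indices. -/
noncomputable def EAm (A : ℕ → ℕ → ℂ) (n m : ℕ) : Set (Fin (n + 1) → ℂ) :=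
  {x | ∀ i : Fin m → Fin (m + n), StrictMono i → MvPolynomial.eval x (PIA A n m i) = 0}

/-!
Let `D_I` be the maximal minors of the banded matrix `∑ x_s I_s` alone. Then
`D_I - (-1)^m P_I` has degree `< m`, so on `E_A^{(m)}` every `D_I` agrees with a polynomial of
degree `< m`. The `D_I` span all forms of degree `m`: for sorted `e`, the minor on the columns
`i_c = e_c + c` is `∏ x_{e_c}` plus monomials `∏ x_{i_c - σ c}` whose indices have a strictly
larger sum of squares (rearrangement inequality), so a downward induction on that sum applies.
Hence modulo the vanishing ideal of `E_A^{(m)}` every polynomial has degree `< m`. As polynomials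
separate finitely many points, `E_A^{(m)}` has at most as many points as the space of polynomials
of degree `≤ m - 1` in `n + 1` variables has dimensions, namely `binom(m + n, n + 1)`.
-/

open MvPolynomial Finset

theorem MvPolynomial.monomial_one_eq_prod_toMultiset {σ R : Type*} [CommSemiring R]
    (μ : σ →₀ ℕ) : monomial μ (1 : R) = ((Finsupp.toMultiset μ).map X).prod := by
  classical
  rw [Finsupp.toMultiset_map, Finsupp.prod_toMultiset,
    Finsupp.prod_mapDomain_index (fun _ => pow_zero _) (fun _ _ _ => pow_add _ _ _), monomial_eq,
    C_1, one_mul]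

theorem MvPolynomial.exists_prod_X_eq_monomial {σ R : Type*} [CommSemiring R] {μ : σ →₀ ℕ}
    {k : ℕ} (hμ : μ.degree = k) : ∃ e : Fin k → σ, ∏ c, X (e c) = monomial μ (1 : R) := by
  obtain ⟨l, hl⟩ := Quot.exists_rep (Finsupp.toMultiset μ)
  have hlen : l.length = k := by
    rw [← hμ, Finsupp.degree_apply]
    exact congrArg Multiset.card hl |>.trans (Finsupp.card_toMultiset μ)
  subst hlen
  refine ⟨fun c => l[c.1], ?_⟩
  rw [monomial_one_eq_prod_toMultiset, ← hl, Fin.prod_univ_fun_getElem]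
  rfl

theorem MvPolynomial.finrank_restrictTotalDegree_le_s5 (σ K : Type*) [Fintype σ] [Field K] (d : ℕ) :
    Module.finrank K (restrictTotalDegree σ K d) ≤ (Fintype.card σ + d).choose d := by
  classical
  let pad : {μ : σ →₀ ℕ | (μ.sum fun _ e => e) ≤ d} → Sym (Option σ) d := fun μ =>
    ⟨(Finsupp.toMultiset μ.1).map some + Multiset.replicate (d - μ.1.sum fun _ e => e) none, by
      have : (μ.1.sum fun _ e => e) ≤ d := μ.2
      rw [Multiset.card_add, Multiset.card_map, Finsupp.card_toMultiset, Multiset.card_replicate]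
      exact Nat.add_sub_cancel' this⟩
  have hpad : Function.Injective pad := by
    intro μ ν h
    ext s
    have := congrArg (fun t : Sym (Option σ) d => (t : Multiset (Option σ)).count (some s)) h
    simpa [pad, Multiset.count_map_eq_count' _ _ (Option.some_injective σ),
      Multiset.count_replicate] using this
  have b : Module.Basis {μ : σ →₀ ℕ | (μ.sum fun _ e => e) ≤ d} K (restrictTotalDegree σ K d) :=
    basisRestrictSupport K _
  rw [Module.finrank_eq_nat_card_basis b]
  calc _ ≤ Nat.card (Sym (Option σ) d) := Nat.card_le_card_of_injective pad hpad
    _ = _ := by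
      rw [Nat.card_eq_fintype_card, Sym.card_sym_eq_choose, Fintype.card_option,
        Nat.add_right_comm, Nat.add_sub_cancel]

theorem MvPolynomial.totalDegree_prod_sub_prod_sub_C_le {ι σ R : Type*} [CommRing R]
    (s : Finset ι) (f : ι → MvPolynomial σ R) (c : ι → R)
    (hf : ∀ i ∈ s, (f i).totalDegree ≤ 1) :
    (∏ i ∈ s, f i - ∏ i ∈ s, (f i - C (c i))).totalDegree ≤ s.card - 1 := by
  classical
  induction s using Finset.induction_on with
  | empty => simp
  | insert a s ha ih =>
    have hfs : ∀ i ∈ s, (f i).totalDegree ≤ 1 := fun i hi => hf i (mem_insert_of_mem hi)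
    rcases s.eq_empty_or_nonempty with rfl | hs
    · simp
    have hprod : (∏ i ∈ s, (f i - C (c i))).totalDegree ≤ s.card :=
      (totalDegree_finsetProd _ _).trans <| (sum_le_sum fun i hi =>
        (totalDegree_sub_C_le _ _).trans (hfs i hi)).trans (by simp)
    rw [prod_insert ha, prod_insert ha, card_insert_of_notMem ha, Nat.add_sub_cancel,
      show f a * ∏ i ∈ s, f i - (f a - C (c a)) * ∏ i ∈ s, (f i - C (c i)) =
        f a * (∏ i ∈ s, f i - ∏ i ∈ s, (f i - C (c i))) + C (c a) * ∏ i ∈ s, (f i - C (c i)) by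
      ring]
    refine (totalDegree_add _ _).trans (max_le ?_ ?_)
    · refine (totalDegree_mul _ _).trans ?_
      have := hf a (mem_insert_self a s)
      have := ih hfs
      have := hs.card_pos
      omega
    · exact (totalDegree_mul _ _).trans (by simpa using hprod)

theorem Matrix.totalDegree_det_sub_det_sub_map_C_le {n σ R : Type*} [Fintype n] [DecidableEq n]
    [CommRing R] (M : Matrix n n (MvPolynomial σ R)) (N : Matrix n n R)
    (hM : ∀ i j, (M i j).totalDegree ≤ 1) :
    (M.det - (M - N.map C).det).totalDegree ≤ Fintype.card n - 1 := by
  simp only [det_apply, ← sum_sub_distrib, ← smul_sub]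
  refine (totalDegree_finsetSum _ _).trans <| Finset.sup_le fun σ _ => ?_
  exact (totalDegree_smul_le _ _).trans <|
    totalDegree_prod_sub_prod_sub_C_le _ _ _ (fun i _ => hM (σ i) i)

theorem MvPolynomial.restrictTotalDegree_sup_eq_top_s5 {σ R : Type*} [CommRing R]
    (J : Ideal (MvPolynomial σ R)) (d : ℕ)
    (h : homogeneousSubmodule σ R (d + 1) ≤ restrictTotalDegree σ R d ⊔ J.restrictScalars R) :
    restrictTotalDegree σ R d ⊔ J.restrictScalars R = ⊤ := by
  set L := restrictTotalDegree σ R d ⊔ J.restrictScalars R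
  have hsucc : ∀ p : MvPolynomial σ R, p.totalDegree ≤ d + 1 → p ∈ L := by
    intro p hp
    rw [← sum_homogeneousComponent p]
    refine Submodule.sum_mem _ fun k hk => ?_
    rcases (Nat.lt_succ_iff.1 (mem_range.1 hk)).trans hp |>.lt_or_eq with hk | rfl
    · exact Submodule.mem_sup_left <| (mem_restrictTotalDegree _ _ _).2 <|
        (homogeneousComponent_isHomogeneous k p).totalDegree_le.trans (Nat.lt_succ_iff.1 hk)
    · exact h (homogeneousComponent_mem _ p)
  refine Submodule.eq_top_iff'.2 fun p => ?_
  induction p using MvPolynomial.induction_on with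
  | C a => exact Submodule.mem_sup_left <| (mem_restrictTotalDegree _ _ _).2 <| by simp
  | add p q hp hq => exact L.add_mem hp hq
  | mul_X p s hp =>
    obtain ⟨g, hg, j, hj, rfl⟩ := Submodule.mem_sup.1 hp
    rw [add_mul]
    refine L.add_mem (hsucc _ ?_) (Submodule.mem_sup_right (J.mul_mem_right _ hj))
    exact (totalDegree_mul _ _).trans (add_le_add ((mem_restrictTotalDegree _ _ _).1 hg)
      ((totalDegree_monomial_le _ _).trans (by simp)))

theorem MvPolynomial.exists_eval_eq_one_and_eval_eq_zero {σ K : Type*} [Field K]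
    (T : Finset (σ → K)) (p : σ → K) :
    ∃ f : MvPolynomial σ K, eval p f = 1 ∧ ∀ q ∈ T, q ≠ p → eval q f = 0 := by
  classical
  have separate : ∀ q : σ → K, q ≠ p → ∃ ℓ : MvPolynomial σ K, eval p ℓ = 1 ∧ eval q ℓ = 0 := by
    intro q hq
    obtain ⟨s, hs⟩ := Function.ne_iff.1 hq
    refine ⟨C (p s - q s)⁻¹ * (X s - C (q s)), ?_, by simp⟩
    simp [inv_mul_cancel₀ (sub_ne_zero.2 (Ne.symm hs))]
  choose! ℓ hℓp hℓq using separate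
  refine ⟨∏ q ∈ T.erase p, ℓ q, ?_, fun q hq hqp => ?_⟩
  · rw [map_prod]
    exact prod_eq_one fun q hq => hℓp q (ne_of_mem_erase hq)
  · rw [map_prod]
    exact prod_eq_zero (mem_erase.2 ⟨hqp, hq⟩) (hℓq q hqp)

theorem MvPolynomial.surjective_pi_aeval {σ K : Type*} [Field K] (T : Finset (σ → K)) :
    Function.Surjective
      (LinearMap.pi fun t : T => (aeval t.1).toLinearMap : MvPolynomial σ K →ₗ[K] T → K) := by
  choose f hf₁ hf₀ using fun t : T => exists_eval_eq_one_and_eval_eq_zero T t.1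
  intro v
  refine ⟨∑ t, v t • f t, ?_⟩
  ext s
  simp only [LinearMap.pi_apply, AlgHom.toLinearMap_apply, aeval_eq_eval, map_sum, map_smul,
    smul_eq_mul]
  rw [Fintype.sum_eq_single s fun t hts => by
      rw [hf₀ t s.1 s.2 (Subtype.coe_ne_coe.2 hts.symm), mul_zero],
    hf₁, mul_one]

theorem MvPolynomial.card_le_finrank_of_sup_vanishingIdeal_eq_top_s5 {σ K : Type*} [Field K]
    {E : Set (σ → K)} {W : Submodule K (MvPolynomial σ K)} [FiniteDimensional K W]
    (hW : W ⊔ (vanishingIdeal K E).restrictScalars K = ⊤) {T : Finset (σ → K)} (hT : ↑T ⊆ E) :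
    T.card ≤ Module.finrank K W := by
  set ev : MvPolynomial σ K →ₗ[K] T → K := LinearMap.pi fun t : T => (aeval t.1).toLinearMap
  have hJ : (vanishingIdeal K E).restrictScalars K ≤ LinearMap.ker ev := fun f hf => by
    ext t
    exact hf t.1 (hT t.2)
  have hrange : W.map ev = ⊤ := by
    rw [← LinearMap.range_eq_top.2 (surjective_pi_aeval T), LinearMap.range_eq_map, ← hW,
      Submodule.map_sup, LinearMap.le_ker_iff_map.1 hJ, sup_bot_eq]
  calc T.card = Module.finrank K (T → K) := by simp
    _ = Module.finrank K (W.map ev) := by rw [hrange, finrank_top]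
    _ ≤ Module.finrank K W := Submodule.finrank_map_le ev W

theorem MvPolynomial.finite_and_ncard_le_finrank_of_sup_vanishingIdeal_eq_top {σ K : Type*}
    [Field K] {E : Set (σ → K)} {W : Submodule K (MvPolynomial σ K)} [FiniteDimensional K W]
    (hW : W ⊔ (vanishingIdeal K E).restrictScalars K = ⊤) :
    E.Finite ∧ E.ncard ≤ Module.finrank K W := by
  have hfin : E.Finite := by
    by_contra hinf
    obtain ⟨T, hT, hcard⟩ := Set.Infinite.exists_subset_card_eq hinf (Module.finrank K W + 1)
    have := card_le_finrank_of_sup_vanishingIdeal_eq_top_s5 hW hT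
    omega
  refine ⟨hfin, ?_⟩
  rw [Set.ncard_eq_toFinset_card E hfin]
  exact card_le_finrank_of_sup_vanishingIdeal_eq_top_s5 hW (by simp)

theorem Equiv.Perm.eq_one_of_monotone {ι : Type*} [LinearOrder ι] [Finite ι]
    {σ : Equiv.Perm ι} (hσ : Monotone σ) : σ = 1 := by
  have := Finite.to_wellFoundedLT (α := ι)
  ext x
  exact congrArg (· x) <| Subsingleton.elim
    (hσ.strictMono_of_injective σ.injective |>.orderIsoOfSurjective σ σ.surjective)
    (OrderIso.refl ι)

theorem sum_sq_sub_lt_sum_sq_sub_comp_perm {ι α : Type*} [LinearOrder ι] [Fintype ι]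
    [CommRing α] [LinearOrder α] [IsStrictOrderedRing α] {f g : ι → α}
    (hf : StrictMono f) (hg : StrictMono g) {σ : Equiv.Perm ι} (hσ : σ ≠ 1) :
    ∑ i, (g i - f i) ^ 2 < ∑ i, (g i - f (σ i)) ^ 2 := by
  have hmono : Monovary f g := fun i j hij => hf.monotone (hg.lt_iff_lt.1 hij).le
  have hlt : ∑ i, f (σ i) * g i < ∑ i, f i * g i := by
    refine hmono.sum_comp_perm_mul_lt_sum_mul_iff.2 fun h => hσ ?_
    exact Equiv.Perm.eq_one_of_monotone <| monotone_iff_forall_lt.2 fun i j hij =>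
      hf.le_iff_le.1 (h (hg hij))
  have hsq : ∑ i, f (σ i) ^ 2 = ∑ i, f i ^ 2 := Equiv.sum_comp σ (f · ^ 2)
  have expand : ∀ h : ι → α,
      ∑ i, (g i - h i) ^ 2 = ∑ i, g i ^ 2 + ∑ i, h i ^ 2 - 2 * ∑ i, h i * g i := by
    intro h
    simp only [mul_sum, ← sum_add_distrib, ← sum_sub_distrib]
    exact sum_congr rfl fun i _ => by ring
  rw [expand f, expand (fun i => f (σ i)), hsq]
  linarith

section ShiftMatrix

variable (R : Type*) [CommRing R] (n m : ℕ)

/-- The matrix `∑ x_s I_s`, whose row `r` carries `x_s` in column `r + s` (`0`-based). -/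
noncomputable def shiftMatrix : Matrix (Fin m) (Fin (m + n)) (MvPolynomial (Fin (n + 1)) R) :=
  Matrix.of fun r j => if h : (r : ℕ) ≤ j ∧ (j : ℕ) ≤ r + n then X ⟨j - r, by omega⟩ else 0

noncomputable def shiftMinor (i : Fin m → Fin (m + n)) : MvPolynomial (Fin (n + 1)) R :=
  ((shiftMatrix R n m).submatrix id i).det

variable {R n m}

theorem totalDegree_shiftMatrix_le (r : Fin m) (j : Fin (m + n)) :
    (shiftMatrix R n m r j).totalDegree ≤ 1 := by
  rw [shiftMatrix, Matrix.of_apply]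
  split_ifs
  · exact (totalDegree_monomial_le _ _).trans (by simp)
  · simp

theorem prod_shiftMatrix_eq_zero_or (ρ : Fin m → Fin m) (i : Fin m → Fin (m + n)) :
    ∏ r, shiftMatrix R n m (ρ r) (i r) = 0 ∨
      ∃ g : Fin m → Fin (n + 1), (∀ r, (g r : ℕ) + ρ r = i r) ∧
        ∏ r, shiftMatrix R n m (ρ r) (i r) = ∏ r, X (g r) := by
  by_cases hband : ∀ r, (ρ r : ℕ) ≤ i r ∧ (i r : ℕ) ≤ ρ r + n
  · refine .inr ⟨fun r => ⟨i r - ρ r, by have := hband r; omega⟩,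
      fun r => by have := hband r; dsimp only; omega, ?_⟩
    exact prod_congr rfl fun r _ => dif_pos (hband r)
  · push Not at hband
    obtain ⟨r, hr⟩ := hband
    exact .inl <| prod_eq_zero (mem_univ r) <| dif_neg fun h => (hr h.1).not_ge h.2

theorem prod_X_mem_span_shiftMinor_of_monotone {e : Fin m → Fin (n + 1)} (he : Monotone e)
    (ih : ∀ g : Fin m → Fin (n + 1), ∑ c, (e c : ℕ) ^ 2 < ∑ c, (g c : ℕ) ^ 2 →
      ∏ c, X (g c) ∈ Submodule.span R (shiftMinor R n m '' {i | StrictMono i})) :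
    ∏ c, X (e c) ∈ Submodule.span R (shiftMinor R n m '' {i | StrictMono i}) := by
  set S := Submodule.span R (shiftMinor R n m '' {i | StrictMono i})
  let i : Fin m → Fin (m + n) := fun c => ⟨e c + c, by omega⟩
  have hi : StrictMono i := fun a b hab => by
    have := he hab.le
    simp only [i, Fin.mk_lt_mk]
    omega
  have hdiag : ∏ r, shiftMatrix R n m r (i r) = ∏ c, X (e c) :=
    prod_congr rfl fun r _ => by
      rw [shiftMatrix, Matrix.of_apply, dif_pos ⟨by simp [i], by simp only [i]; omega⟩]
      congr 1
      ext
      simp [i]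
  have hdet : shiftMinor R n m i = ∏ c, X (e c) +
      ∑ σ ∈ univ.erase 1, Equiv.Perm.sign σ • ∏ r, shiftMatrix R n m (σ r) (i r) := by
    rw [shiftMinor, Matrix.det_apply, ← add_sum_erase _ _ (mem_univ 1)]
    simp [hdiag]
  have hterm : ∀ σ ∈ univ.erase (1 : Equiv.Perm (Fin m)),
      Equiv.Perm.sign σ • ∏ r, shiftMatrix R n m (σ r) (i r) ∈ S := by
    intro σ hσ
    rw [Units.smul_def]
    refine zsmul_mem ?_ _
    rcases prod_shiftMatrix_eq_zero_or (R := R) σ i with h0 | ⟨g, hg, hprod⟩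
    · exact h0 ▸ S.zero_mem
    rw [hprod]
    refine ih g ?_
    have key := sum_sq_sub_lt_sum_sq_sub_comp_perm (f := fun r : Fin m => ((r : ℕ) : ℤ))
      (g := fun r => ((i r : ℕ) : ℤ)) (fun a b h => by simpa using h)
      (fun a b h => by simpa using hi h) (ne_of_mem_erase hσ)
    have he' : ∀ r, ((e r : ℕ) : ℤ) = (i r : ℕ) - (r : ℕ) := fun r => by simp [i]
    have hg' : ∀ r, ((g r : ℕ) : ℤ) = (i r : ℕ) - (σ r : ℕ) := fun r => by
      have := hg r
      omega
    zify
    simp only [he', hg']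
    exact key
  have := S.sub_mem (Submodule.subset_span ⟨i, hi, rfl⟩) (S.sum_mem hterm)
  rwa [hdet, add_sub_cancel_right] at this

theorem prod_X_mem_span_shiftMinor (e : Fin m → Fin (n + 1)) :
    ∏ c, X (e c) ∈ Submodule.span R (shiftMinor R n m '' {i | StrictMono i}) := by
  induction e using
    (measure fun e : Fin m → Fin (n + 1) => m * n ^ 2 - ∑ c, (e c : ℕ) ^ 2).wf.induction with
  | _ e ih =>
    have hbound : ∀ g : Fin m → Fin (n + 1), ∑ c, (g c : ℕ) ^ 2 ≤ m * n ^ 2 := fun g =>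
      (sum_le_sum fun c _ => Nat.pow_le_pow_left (Nat.lt_succ_iff.1 (g c).isLt) 2).trans
        (by simp)
    have hsort : ∏ c, (X (e c) : MvPolynomial (Fin (n + 1)) R) =
        ∏ c, X ((e ∘ Tuple.sort e) c) :=
      (Equiv.prod_comp (Tuple.sort e) _).symm
    have hsq : ∑ c, ((e ∘ Tuple.sort e) c : ℕ) ^ 2 = ∑ c, (e c : ℕ) ^ 2 :=
      Equiv.sum_comp (Tuple.sort e) fun c => (e c : ℕ) ^ 2
    rw [hsort]
    refine prod_X_mem_span_shiftMinor_of_monotone (Tuple.monotone_sort e) fun g hg => ih g ?_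
    have := hbound g
    show m * n ^ 2 - _ < m * n ^ 2 - _
    omega

theorem homogeneousSubmodule_le_span_shiftMinor :
    homogeneousSubmodule (Fin (n + 1)) R m ≤
      Submodule.span R (shiftMinor R n m '' {i | StrictMono i}) := by
  rw [homogeneousSubmodule_eq_finsupp_supported, AddMonoidAlgebra.supported_eq_span_single,
    Submodule.span_le]
  rintro _ ⟨μ, hμ, rfl⟩
  obtain ⟨e, he⟩ := exists_prod_X_eq_monomial (R := R) hμ
  dsimp only
  rw [single_eq_monomial, ← he]
  exact prod_X_mem_span_shiftMinor e

end ShiftMatrix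

theorem PIA_eq_det_sub (A : ℕ → ℕ → ℂ) (n m : ℕ) (i : Fin m → Fin (m + n)) :
    PIA A n m i =
      ((Matrix.of fun r c : Fin m => A r (i c)).map C - (shiftMatrix ℂ n m).submatrix id i).det :=
  rfl

theorem shiftMinor_mem_restrictTotalDegree_sup_vanishingIdeal (A : ℕ → ℕ → ℂ) {n m : ℕ}
    {i : Fin m → Fin (m + n)} (hi : StrictMono i) :
    shiftMinor ℂ n m i ∈ restrictTotalDegree (Fin (n + 1)) ℂ (m - 1) ⊔
      (vanishingIdeal ℂ (EAm A n m)).restrictScalars ℂ := by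
  set M := (shiftMatrix ℂ n m).submatrix id i
  set N : Matrix (Fin m) (Fin m) ℂ := Matrix.of fun r c => A r (i c)
  have hlow : M.det - (M - N.map C).det ∈ restrictTotalDegree (Fin (n + 1)) ℂ (m - 1) := by
    rw [mem_restrictTotalDegree]
    simpa using M.totalDegree_det_sub_det_sub_map_C_le N fun r c => totalDegree_shiftMatrix_le _ _
  have hvanish : (M - N.map C).det ∈ (vanishingIdeal ℂ (EAm A n m)).restrictScalars ℂ := by
    rw [← neg_sub, Matrix.det_neg, ← PIA_eq_det_sub]
    refine Ideal.mul_mem_left _ _ fun x hx => ?_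
    simpa using hx i hi
  have := Submodule.add_mem_sup hlow hvanish
  rwa [sub_add_cancel] at this

theorem restrictTotalDegree_sup_vanishingIdeal_EAm_eq_top (A : ℕ → ℕ → ℂ) {n m : ℕ}
    (hm : 1 ≤ m) :
    restrictTotalDegree (Fin (n + 1)) ℂ (m - 1) ⊔
      (vanishingIdeal ℂ (EAm A n m)).restrictScalars ℂ = ⊤ := by
  obtain ⟨d, rfl⟩ : ∃ d, m = d + 1 := ⟨m - 1, by omega⟩
  refine restrictTotalDegree_sup_eq_top_s5 _ _
    (homogeneousSubmodule_le_span_shiftMinor.trans (Submodule.span_le.2 ?_))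
  rintro _ ⟨i, hi, rfl⟩
  exact shiftMinor_mem_restrictTotalDegree_sup_vanishingIdeal A hi

theorem stmt5 (A : ℕ → ℕ → ℂ) (n m : ℕ) (hm : 1 ≤ m) :
    (EAm A n m).Finite ∧ (EAm A n m).ncard ≤ (m + n).choose (n + 1) := by
  obtain ⟨hfin, hcard⟩ := finite_and_ncard_le_finrank_of_sup_vanishingIdeal_eq_top
    (restrictTotalDegree_sup_vanishingIdeal_EAm_eq_top A hm)
  refine ⟨hfin, hcard.trans <| (finrank_restrictTotalDegree_le_s5 _ _ _).trans_eq ?_⟩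
  rw [Fintype.card_fin, show n + 1 + (m - 1) = m - 1 + (n + 1) by omega, Nat.choose_symm_add]
  congr 1
  omega
end

section
/- Let k, h ≥ 1 be integers, c_{−k},…,c_h ∈ ℂ with c_h ≠ 0 and c_{−k} ≠ 0, and let n be an integer with 0 ≤ n < h. Then the set C_A = { x ∈ ℂ^{n+1} : |α_k(x)| = |α_{k+1}(x)| = … = |α_{k+n+1}(x)| } is a compact subset of ℂ^{n+1}, where α_1(x),…,α_{h+k}(x) are the roots, counted with multiplicity and ordered by nondecreasing modulus, of Q(t,x) = Σ_{j=−k}^{h} c_j t^{j+k} − Σ_{j=0}^{n} x_j t^{j+k}. -/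
open Polynomial

/-- The symbol `Q(t,x) = t^k (∑_{j=-k}^h c_j t^j - ∑_{j=0}^n x_j t^j)` of a banded Toeplitz
matrix with symbol coefficients `c : ℤ → ℂ` (supported on `[-k,h]`), as a polynomial in `t`
of degree `h + k`. -/
noncomputable def Qsymb (k h n : ℕ) (c : ℤ → ℂ) (x : Fin (n + 1) → ℂ) : Polynomial ℂ :=
  ∑ j ∈ Finset.range (h + k + 1),
    Polynomial.C (c ((j : ℤ) - (k : ℤ)) -
        if hj : k ≤ j ∧ j ≤ k + n then x ⟨j - k, by omega⟩ else 0) *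
      Polynomial.X ^ j

/-- The set `C_A = { x ∈ ℂ^{n+1} : |α_k(x)| = … = |α_{k+n+1}(x)| }`, where
`α_1(x), …, α_{h+k}(x)` are the roots of `Q(t,x)` counted with multiplicity and ordered by
nondecreasing modulus (here listed `0`-based, so positions `k, …, k+n+1` become
`k-1, …, k+n`). -/
noncomputable def CA (k h n : ℕ) (c : ℤ → ℂ) : Set (Fin (n + 1) → ℂ) :=
  {x | ∃ α : Fin (h + k) → ℂ,
    (Qsymb k h n c x).roots = Multiset.map α Finset.univ.val ∧
    (Monotone fun i => ‖α i‖) ∧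
    ∀ j₁ j₂ : Fin (h + k), k - 1 ≤ (j₁ : ℕ) → (j₁ : ℕ) ≤ k + n →
      k - 1 ≤ (j₂ : ℕ) → (j₂ : ℕ) ≤ k + n →
        ‖α j₁‖ = ‖α j₂‖}

/-!
Writing `Q(·, x) = c_h ∏ (t - α_i)`, the point `x` is read off continuously from the ordered
root tuple `α`, while the coefficients of `∏ (t - α_i)` outside degrees `k, …, k+n` are fixed.
So `C_A` is a continuous image of a closed set of root tuples, and it suffices to bound the
roots. Let `r` be the common modulus of the window roots. If `r > 1`, the `h + 1` roots of
modulus `≥ r` form a factor whose normalisation to constant term `1` has Mahler measure `1`,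
and the `k` fixed lowest coefficients then bound the product of these roots, hence `r`. The
roots of modulus `≤ r` now form a factor with bounded coefficients, and the `h - n` fixed
highest coefficients bound the coefficients, hence (Cauchy bound) the roots, of the
complementary factor.
-/

open Finset

namespace Polynomial

section NormedCommRing

variable {R : Type*} [NormedCommRing R]

theorem norm_coeff_le_of_coeff_zero_eq_one {a b : R[X]} {K D : ℝ} (ha0 : a.coeff 0 = 1)
    (haK : ∀ i, ‖a.coeff i‖ ≤ K) {s : ℕ} (hD : ∀ i ≤ s, ‖(a * b).coeff i‖ ≤ D) :
    ‖b.coeff s‖ ≤ (D + 1) * (1 + K) ^ s := by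
  have hK : 0 ≤ K := (norm_nonneg _).trans (haK 0)
  have hD0 : 0 ≤ D := (norm_nonneg _).trans (hD 0 s.zero_le)
  induction s using Nat.strong_induction_on with
  | _ s ih =>
  have hsplit : (a * b).coeff s = ∑ i ∈ range s, b.coeff i * a.coeff (s - i) + b.coeff s := by
    rw [mul_comm, coeff_mul,
      Nat.sum_antidiagonal_eq_sum_range_succ (fun i j => b.coeff i * a.coeff j), sum_range_succ,
      Nat.sub_self, ha0, mul_one]
  have hsum : ‖∑ i ∈ range s, b.coeff i * a.coeff (s - i)‖ ≤ (D + 1) * ((1 + K) ^ s - 1) :=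
    calc _ ≤ ∑ i ∈ range s, (D + 1) * (1 + K) ^ i * K := by
          refine norm_sum_le_of_le _ fun i hi => (norm_mul_le _ _).trans ?_
          exact mul_le_mul (ih i (mem_range.1 hi) fun j hj => hD j (by grind)) (haK _)
            (norm_nonneg _) (by positivity)
      _ = (D + 1) * ((∑ i ∈ range s, (1 + K) ^ i) * (1 + K - 1)) := by
          rw [← sum_mul, ← mul_sum]; ring
      _ = (D + 1) * ((1 + K) ^ s - 1) := by rw [geom_sum_mul]
  calc ‖b.coeff s‖ = ‖(a * b).coeff s - ∑ i ∈ range s, b.coeff i * a.coeff (s - i)‖ := by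
        rw [hsplit, add_sub_cancel_left]
    _ ≤ D + (D + 1) * ((1 + K) ^ s - 1) :=
        (norm_sub_le _ _).trans (add_le_add (hD s le_rfl) hsum)
    _ ≤ (D + 1) * (1 + K) ^ s := by linarith

theorem norm_coeff_le_of_monic_mul {A B : R[X]} {K D : ℝ} (hA : A.Monic) (hB : B ≠ 0)
    (hAK : ∀ i, ‖A.coeff i‖ ≤ K)
    (hD : ∀ i ≤ B.natDegree, ‖(A * B).coeff ((A * B).natDegree - i)‖ ≤ D) (j : ℕ) :
    ‖B.coeff j‖ ≤ (D + 1) * (1 + K) ^ B.natDegree := by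
  have hK : 0 ≤ K := (norm_nonneg _).trans (hAK 0)
  have hD0 : 0 ≤ D := (norm_nonneg _).trans (hD 0 (Nat.zero_le _))
  have hlc : A.leadingCoeff * B.leadingCoeff ≠ 0 := by
    rwa [hA.leadingCoeff, one_mul, leadingCoeff_ne_zero]
  have hdeg : (A * B).natDegree = A.natDegree + B.natDegree := natDegree_mul' hlc
  rcases le_or_gt j B.natDegree with hj | hj
  · have hrev := norm_coeff_le_of_coeff_zero_eq_one (a := A.reverse) (b := B.reverse)
      (s := B.natDegree - j) (by rw [coeff_zero_reverse, hA.leadingCoeff])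
      (fun i => by rw [coeff_reverse]; exact hAK _)
      (fun i hi => by
        rw [← reverse_mul hlc, coeff_reverse, revAt_le (by omega)]
        exact hD i (by omega))
    rw [coeff_reverse, revAt_le (by omega), Nat.sub_sub_self hj] at hrev
    exact hrev.trans (by gcongr; linarith; omega)
  · rw [coeff_eq_zero_of_natDegree_lt hj, norm_zero]
    positivity

end NormedCommRing

theorem continuous_coeff_prod_X_sub_C {R ι : Type*} [CommRing R] [TopologicalSpace R]
    [IsTopologicalRing R] [Fintype ι] (j : ℕ) :
    Continuous fun α : ι → R => (∏ i, (X - C (α i))).coeff j := by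
  have h : ∀ α : ι → R, (∏ i, (X - C (α i))).coeff j =
      MvPolynomial.eval α ((∏ i, (X - C (MvPolynomial.X i : MvPolynomial ι R))).coeff j) :=
    fun α => by
    rw [← coeff_map, Polynomial.map_prod]
    simp
  simp_rw [h]
  exact MvPolynomial.continuous_eval _

theorem Monic.norm_le_of_isRoot {K : Type*} [NormedDivisionRing K] {p : K[X]} (hp : p.Monic)
    {M : ℝ} (hM : ∀ i, ‖p.coeff i‖ ≤ M) {z : K} (hz : p.IsRoot z) : ‖z‖ ≤ M + 1 := by
  have hM0 : 0 ≤ M := (norm_nonneg _).trans (hM 0)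
  have hsup : (range p.natDegree).sup (‖p.coeff ·‖₊) ≤ ⟨M, hM0⟩ :=
    Finset.sup_le fun i _ => hM i
  have hcb : cauchyBound p ≤ ⟨M, hM0⟩ + 1 := by
    rw [cauchyBound, hp.leadingCoeff, nnnorm_one, div_one]
    exact add_le_add_left hsup 1
  exact_mod_cast ((hz.norm_lt_cauchyBound hp.ne_zero).trans_le hcb).le

theorem mahlerMeasure_prod_X_sub_C {ι : Type*} (s : Finset ι) (β : ι → ℂ) :
    (∏ i ∈ s, (X - C (β i))).mahlerMeasure = ∏ i ∈ s, max 1 ‖β i‖ := by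
  rw [prod_eq_multiset_prod, prod_mahlerMeasure_eq_mahlerMeasure_prod, Multiset.map_map]
  simp [mahlerMeasure_X_sub_C]

theorem norm_coeff_le_two_pow_mul_mahlerMeasure (p : ℂ[X]) (j : ℕ) :
    ‖p.coeff j‖ ≤ 2 ^ p.natDegree * p.mahlerMeasure :=
  (p.norm_coeff_le_choose_mul_mahlerMeasure j).trans <| by
    gcongr
    · exact p.mahlerMeasure_nonneg
    · exact_mod_cast Nat.choose_le_two_pow _ _

theorem prod_norm_le_of_mul_prod_X_sub_C {ι : Type*} {s : Finset ι} {β : ι → ℂ}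
    (hβ : ∀ i ∈ s, 1 ≤ ‖β i‖) {B : ℂ[X]} (hB : B.Monic) {D : ℝ}
    (hD : ∀ j ≤ B.natDegree, ‖(B * ∏ i ∈ s, (X - C (β i))).coeff j‖ ≤ D) :
    ∏ i ∈ s, ‖β i‖ ≤ (D + 1) * (1 + 2 ^ #s) ^ B.natDegree := by
  set A := ∏ i ∈ s, (X - C (β i))
  set w := A.coeff 0
  have hw : ‖w‖ = ∏ i ∈ s, ‖β i‖ := by
    simp [w, A, coeff_zero_eq_eval_zero, eval_prod, norm_prod]
  have hw0 : w ≠ 0 :=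
    norm_ne_zero_iff.1 <| hw ▸ (prod_pos fun i hi => one_pos.trans_le (hβ i hi)).ne'
  have ha : ∀ i, ‖(C w⁻¹ * A).coeff i‖ ≤ 2 ^ #s := fun i => by
    have hM : (C w⁻¹ * A).mahlerMeasure = 1 := by
      rw [mahlerMeasure_mul, mahlerMeasure_const, mahlerMeasure_prod_X_sub_C, norm_inv,
        prod_congr rfl fun i hi => max_eq_right (hβ i hi), ← hw,
        inv_mul_cancel₀ (norm_ne_zero_iff.2 hw0)]
    calc _ ≤ 2 ^ (C w⁻¹ * A).natDegree * (C w⁻¹ * A).mahlerMeasure :=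
          norm_coeff_le_two_pow_mul_mahlerMeasure _ i
      _ ≤ 2 ^ #s := by
        rw [hM, mul_one]
        gcongr
        · norm_num
        · exact natDegree_C_mul_le _ _ |>.trans (natDegree_finsetProd_X_sub_C_eq_card _ _).le
  have hab : C w⁻¹ * A * (C w * B) = B * A := by
    rw [mul_mul_mul_comm, ← C_mul, inv_mul_cancel₀ hw0, C_1, one_mul, mul_comm]
  have := norm_coeff_le_of_coeff_zero_eq_one (b := C w * B) (s := B.natDegree)
    (by rw [coeff_C_mul, inv_mul_cancel₀ hw0]) ha (hab ▸ hD)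
  rwa [coeff_C_mul, hB.coeff_natDegree, mul_one, hw] at this

theorem norm_le_of_monic_mul_prod_X_sub_C {ι : Type*} {t : Finset ι} {γ : ι → ℂ} {A : ℂ[X]}
    (hA : A.Monic) {K D : ℝ} (hAK : ∀ i, ‖A.coeff i‖ ≤ K)
    (hD : ∀ j ≤ #t, ‖(A * ∏ i ∈ t, (X - C (γ i))).coeff
      ((A * ∏ i ∈ t, (X - C (γ i))).natDegree - j)‖ ≤ D) {i : ι} (hi : i ∈ t) :
    ‖γ i‖ ≤ (D + 1) * (1 + K) ^ #t + 1 := by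
  have hB : (∏ i ∈ t, (X - C (γ i))).Monic :=
    monic_prod_of_monic _ _ fun i _ => monic_X_sub_C _
  have hdeg := natDegree_finsetProd_X_sub_C_eq_card t γ
  refine hB.norm_le_of_isRoot (fun j => ?_) ?_
  · simpa [hdeg] using norm_coeff_le_of_monic_mul hA hB.ne_zero hAK (hdeg ▸ hD) j
  · simp [IsRoot, eval_prod, prod_eq_zero hi]

theorem roots_eq_map_iff {K ι : Type*} [Field K] [IsAlgClosed K] [Fintype ι] {p : K[X]}
    (hp : p ≠ 0) (α : ι → K) :
    p.roots = univ.val.map α ↔ p = C p.leadingCoeff * ∏ i, (X - C (α i)) := by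
  have hprod : ∏ i, (X - C (α i)) = ((univ.val.map α).map fun a => X - C a).prod := by
    rw [Multiset.map_map]
    rfl
  rw [hprod]
  constructor
  · intro h
    rw [← h, C_leadingCoeff_mul_prod_multiset_X_sub_C IsAlgClosed.card_roots_eq_natDegree]
  · intro h
    rw [h, roots_C_mul _ (leadingCoeff_ne_zero.2 hp), roots_multiset_prod_X_sub_C]

end Polynomial

def orderedRootTuples (N k n : ℕ) (f : ℕ → ℂ) : Set (Fin N → ℂ) :=
  {α | (Monotone fun i => ‖α i‖) ∧
    (∀ j₁ j₂ : Fin N, k - 1 ≤ (j₁ : ℕ) → (j₁ : ℕ) ≤ k + n →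
      k - 1 ≤ (j₂ : ℕ) → (j₂ : ℕ) ≤ k + n → ‖α j₁‖ = ‖α j₂‖) ∧
    ∀ j ≤ N, (j < k ∨ k + n < j) → (∏ i, (X - C (α i))).coeff j = f j}

namespace orderedRootTuples

variable {N k n : ℕ} {f : ℕ → ℂ} {α : Fin N → ℂ}

theorem norm_le_norm (hα : α ∈ orderedRootTuples N k n f) {i j : Fin N} (hi : (i : ℕ) ≤ k + n)
    (hj : k - 1 ≤ (j : ℕ)) : ‖α i‖ ≤ ‖α j‖ := by
  rcases le_or_gt i j with hij | hij
  · exact hα.1 hij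
  · exact (hα.2.1 i j (by omega) hi hj (by omega)).le

theorem norm_coeff_le (hα : α ∈ orderedRootTuples N k n f) {j : ℕ} (hj : j ≤ N)
    (hjw : j < k ∨ k + n < j) :
    ‖(∏ i, (X - C (α i))).coeff j‖ ≤ ∑ j ∈ range (N + 1), ‖f j‖ := by
  rw [hα.2.2 j hj hjw]
  exact single_le_sum (f := fun j => ‖f j‖) (fun _ _ => norm_nonneg _) (mem_range.2 (by omega))

theorem exists_norm_le_of_val_le (hk : 1 ≤ k) (hkN : k ≤ N) :
    ∃ R, 1 ≤ R ∧
      ∀ α ∈ orderedRootTuples N k n f, ∀ i : Fin N, (i : ℕ) ≤ k + n → ‖α i‖ ≤ R := by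
  set D := ∑ j ∈ range (N + 1), ‖f j‖
  set sB : Finset (Fin N) := {i | (i : ℕ) < k - 1}
  set sA : Finset (Fin N) := {i | ¬(i : ℕ) < k - 1}
  have hsB : #sB = k - 1 := by rw [Fin.card_filter_val_lt]; omega
  refine ⟨max 1 ((D + 1) * (1 + 2 ^ #sA) ^ #sB), le_max_left _ _, fun α hα i hi => ?_⟩
  set m : Fin N := ⟨k - 1, by omega⟩
  refine (norm_le_norm hα hi (j := m) le_rfl).trans ?_
  rcases le_or_gt ‖α m‖ 1 with hm | hm
  · exact hm.trans (le_max_left _ _)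
  have hsA : ∀ i ∈ sA, 1 ≤ ‖α i‖ := fun i hi =>
    hm.le.trans (norm_le_norm hα (i := m) (by simp [m]; omega) (by simpa [sA] using hi))
  have hB := monic_prod_of_monic sB _ fun i _ => monic_X_sub_C (α i)
  have hprod := prod_norm_le_of_mul_prod_X_sub_C hsA hB (D := D) fun j hj => by
    rw [natDegree_finsetProd_X_sub_C_eq_card, hsB] at hj
    rw [prod_filter_mul_prod_filter_not]
    exact norm_coeff_le hα (by omega) (by omega)
  rw [natDegree_finsetProd_X_sub_C_eq_card] at hprod
  refine le_trans ?_ (hprod.trans (le_max_right _ _))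
  calc ‖α m‖ = ∏ i ∈ {m}, ‖α i‖ := (prod_singleton _ _).symm
    _ ≤ ∏ i ∈ sA, ‖α i‖ :=
      prod_le_prod_of_subset_of_one_le (by simp [sA, m]; omega) (fun _ _ => norm_nonneg _)
        fun i hi _ => hsA i hi

theorem exists_norm_le (hk : 1 ≤ k) (hkn : k + n < N) :
    ∃ R, 1 ≤ R ∧ ∀ α ∈ orderedRootTuples N k n f, ∀ i, ‖α i‖ ≤ R := by
  obtain ⟨R, hR1, hR⟩ := exists_norm_le_of_val_le (N := N) (f := f) (n := n) hk (by omega)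
  set D := ∑ j ∈ range (N + 1), ‖f j‖
  set sS : Finset (Fin N) := {i | (i : ℕ) < k + n + 1}
  set sL : Finset (Fin N) := {i | ¬(i : ℕ) < k + n + 1}
  have hsS : #sS = k + n + 1 := by rw [Fin.card_filter_val_lt]; omega
  have hsL : #sS + #sL = N := by
    rw [card_filter_add_card_filter_not, card_univ, Fintype.card_fin]
  set K : ℝ := 2 ^ #sS * R ^ #sS
  refine ⟨max R ((D + 1) * (1 + K) ^ #sL + 1), hR1.trans (le_max_left _ _), fun α hα i => ?_⟩
  by_cases hi : (i : ℕ) ≤ k + n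
  · exact (hR α hα i hi).trans (le_max_left _ _)
  have hA := monic_prod_of_monic sS _ fun i _ => monic_X_sub_C (α i)
  have hAK : ∀ j, ‖(∏ i ∈ sS, (X - C (α i))).coeff j‖ ≤ K := fun j => by
    refine (norm_coeff_le_two_pow_mul_mahlerMeasure _ j).trans ?_
    rw [natDegree_finsetProd_X_sub_C_eq_card, mahlerMeasure_prod_X_sub_C]
    refine mul_le_mul_of_nonneg_left ?_ (by positivity)
    refine (prod_le_prod (fun _ _ => by positivity) fun i hi => max_le hR1 ?_).trans_eq
      (prod_const R)
    exact hR α hα i (by simp [sS] at hi; omega)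
  refine le_trans ?_ (le_max_right _ _)
  refine norm_le_of_monic_mul_prod_X_sub_C hA hAK (fun j hj => ?_) (by simpa [sL] using hi)
  rw [prod_filter_mul_prod_filter_not, natDegree_finsetProd_X_sub_C_eq_card, card_univ,
    Fintype.card_fin]
  exact norm_coeff_le hα (by omega) (by omega)

theorem isBounded (hk : 1 ≤ k) (hkn : k + n < N) :
    Bornology.IsBounded (orderedRootTuples N k n f) := by
  obtain ⟨R, hR1, hR⟩ := exists_norm_le (f := f) hk hkn
  exact isBounded_iff_forall_norm_le.2
    ⟨R, fun α hα => (pi_norm_le_iff_of_nonneg (by linarith)).2 (hR α hα)⟩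

theorem isClosed : IsClosed (orderedRootTuples N k n f) := by
  have hnorm (i : Fin N) : Continuous fun α : Fin N → ℂ => ‖α i‖ := (continuous_apply i).norm
  simp only [orderedRootTuples, Set.ofPred_and, Set.ofPred_forall]
  refine (isClosed_monotone.preimage (continuous_pi hnorm)).inter
    ((isClosed_iInter fun j₁ => isClosed_iInter fun j₂ => ?_).inter
      (isClosed_iInter fun j => ?_))
  · exact isClosed_iInter fun _ => isClosed_iInter fun _ => isClosed_iInter fun _ =>
      isClosed_iInter fun _ => isClosed_eq (hnorm j₁) (hnorm j₂)
  · exact isClosed_iInter fun _ => isClosed_iInter fun _ =>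
      isClosed_eq (continuous_coeff_prod_X_sub_C j) continuous_const

end orderedRootTuples

section Qsymb

variable {k h n : ℕ} {c : ℤ → ℂ}

theorem coeff_Qsymb (x : Fin (n + 1) → ℂ) (j : ℕ) :
    (Qsymb k h n c x).coeff j =
      if j ≤ h + k then
        c ((j : ℤ) - k) - if hj : k ≤ j ∧ j ≤ k + n then x ⟨j - k, by omega⟩ else 0
      else 0 := by
  simp only [Qsymb, finsetSum_coeff, coeff_C_mul_X_pow]
  rw [sum_ite_eq]
  simp only [mem_range, Nat.lt_succ_iff]

theorem leadingCoeff_Qsymb (hn : n < h) (hch : c h ≠ 0) (x : Fin (n + 1) → ℂ) :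
    (Qsymb k h n c x).leadingCoeff = c h := by
  have htop : (Qsymb k h n c x).coeff (h + k) = c h := by
    rw [coeff_Qsymb, if_pos le_rfl, dif_neg (by omega), sub_zero, Nat.cast_add,
      add_sub_cancel_right]
  have hdeg : (Qsymb k h n c x).natDegree = h + k :=
    natDegree_eq_of_le_of_coeff_ne_zero
      (natDegree_le_iff_coeff_eq_zero.2 fun j hj => by
        rw [coeff_Qsymb, if_neg (by exact_mod_cast hj.not_ge)])
      (htop ▸ hch)
  rw [leadingCoeff, hdeg, htop]

noncomputable def paramOfRoots (k h n : ℕ) (c : ℤ → ℂ) (α : Fin (h + k) → ℂ) :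
    Fin (n + 1) → ℂ :=
  fun i => c (i : ℕ) - c h * (∏ j, (X - C (α j))).coeff (i + k)

theorem continuous_paramOfRoots : Continuous (paramOfRoots k h n c) :=
  continuous_pi fun _ =>
    continuous_const.sub (continuous_const.mul (continuous_coeff_prod_X_sub_C _))

theorem Qsymb_eq_C_mul_prod_iff (hn : n < h) (hch : c h ≠ 0) (x : Fin (n + 1) → ℂ)
    (α : Fin (h + k) → ℂ) :
    Qsymb k h n c x = C (c h) * ∏ i, (X - C (α i)) ↔
      x = paramOfRoots k h n c α ∧
        ∀ j ≤ h + k, (j < k ∨ k + n < j) →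
          (∏ i, (X - C (α i))).coeff j = c (j - k) / c h := by
  set p := ∏ i, (X - C (α i))
  constructor
  · intro hQ
    have hcoeff (j : ℕ) := congrArg (coeff · j) hQ
    simp only [coeff_Qsymb, coeff_C_mul] at hcoeff
    refine ⟨funext fun i => ?_, fun j hj hjw => ?_⟩
    · have := hcoeff (i + k)
      rw [if_pos (by omega), dif_pos (by omega)] at this
      simp only [paramOfRoots, Nat.add_sub_cancel, Fin.eta] at this ⊢
      push_cast at this
      rw [add_sub_cancel_right] at this
      linear_combination -this
    · have := hcoeff j
      rw [if_pos hj, dif_neg (by omega), sub_zero] at this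
      rw [this, mul_div_cancel_left₀ _ hch]
  · rintro ⟨rfl, hout⟩
    have hdeg : p.natDegree = h + k := by
      rw [natDegree_finsetProd_X_sub_C_eq_card, card_univ, Fintype.card_fin]
    ext j
    rw [coeff_Qsymb, coeff_C_mul]
    split_ifs with hj hjw
    · simp only [paramOfRoots, Nat.sub_add_cancel hjw.1]
      push_cast [hjw.1]
      ring
    · rw [sub_zero, hout j hj (by omega), mul_div_cancel₀ _ hch]
    · rw [coeff_eq_zero_of_natDegree_lt (by omega), mul_zero]

theorem CA_eq_image (hn : n < h) (hch : c h ≠ 0) :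
    CA k h n c = paramOfRoots k h n c ''
      orderedRootTuples (h + k) k n fun j => c (j - k) / c h := by
  ext x
  have hQ : Qsymb k h n c x ≠ 0 := fun h0 => hch <| by
    rw [← leadingCoeff_Qsymb hn hch x, h0, leadingCoeff_zero]
  simp only [CA, orderedRootTuples, Set.mem_image, Set.mem_ofPred_eq, roots_eq_map_iff hQ,
    leadingCoeff_Qsymb hn hch, Qsymb_eq_C_mul_prod_iff hn hch]
  constructor
  · rintro ⟨α, ⟨rfl, hcoeff⟩, hmono, hwin⟩
    exact ⟨α, ⟨hmono, hwin, hcoeff⟩, rfl⟩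
  · rintro ⟨α, ⟨hmono, hwin, hcoeff⟩, rfl⟩
    exact ⟨α, ⟨rfl, hcoeff⟩, hmono, hwin⟩

end Qsymb

theorem stmt8_general (k h n : ℕ) (hk : 1 ≤ k) (hn : n < h) (c : ℤ → ℂ)
    (hch : c (h : ℤ) ≠ 0) :
    IsCompact (CA k h n c) := by
  rw [CA_eq_image hn hch]
  exact (Metric.isCompact_of_isClosed_isBounded orderedRootTuples.isClosed
    (orderedRootTuples.isBounded hk (by omega))).image continuous_paramOfRoots

theorem stmt8 (k h n : ℕ) (hk : 1 ≤ k) (hh : 1 ≤ h) (hn : n < h) (c : ℤ → ℂ)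
    (hch : c (h : ℤ) ≠ 0) (hck : c (-(k : ℤ)) ≠ 0)
    (hc : ∀ i : ℤ, (i < -(k : ℤ) ∨ (h : ℤ) < i) → c i = 0) :
    IsCompact (CA k h n c) :=
  stmt8_general k h n hk hn c hch
end

section
/- Let N ≥ 1 and 0 ≤ b < N be integers. Suppose (α^{(m)})_{m≥1} is a sequence of N-tuples of complex numbers with |α^{(m)}_1| ≤ |α^{(m)}_2| ≤ … ≤ |α^{(m)}_N| for every m, such that there exists M > 0 with |α^{(m)}_j| ≤ M for all m and all j ≤ b, while |α^{(m)}_{b+1}| → ∞ as m → ∞. Then |e_{N−b}(α^{(m)}_1,…,α^{(m)}_N)| → ∞ as m → ∞, where e_{N−b} is the (N−b)-th elementary symmetric polynomial in N variables. In particular, if the value e_{N−b}(α^{(m)}) is a fixed constant independent of m, no such divergence of roots is possible. -/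
/-!
Let `k = N - b`. Among the `k`-subsets of the indices, the top one `{b+1, …, N}`
contributes `α_{b+1} ⋯ α_N` to `e_k`. Every other `k`-subset contains an index `j ≤ b`,
with `|α_j| ≤ M`, and the product over its remaining `k - 1` indices is at most
`|α_{b+2} ⋯ α_N|`, the largest product of `k - 1` moduli. Hence
`|e_k| ≥ (|α_{b+1}| - C(N, k) M) |α_{b+2} ⋯ α_N|`, and the last factor is at least `1`
once `|α_{b+1}| ≥ 1`.
-/

open Filter Finset

namespace Finset

variable {ι R : Type*}

theorem prod_le_prod_of_card_eq [CommMonoidWithZero R] [Preorder R] [ZeroLEOneClass R]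
    [PosMulMono R] [DecidableEq ι] {f : ι → R} {s t : Finset ι} {c : R}
    (hf : ∀ i ∈ s, 0 ≤ f i) (hc : 0 ≤ c) (hst : #s = #t)
    (hs : ∀ i ∈ s \ t, f i ≤ c) (ht : ∀ i ∈ t \ s, c ≤ f i) :
    ∏ i ∈ s, f i ≤ ∏ i ∈ t, f i := by
  have hcard : #(s \ t) = #(t \ s) := by
    have := card_inter_add_card_sdiff s t
    have := card_inter_add_card_sdiff t s
    rw [inter_comm] at this
    omega
  have hdiff : ∏ i ∈ s \ t, f i ≤ ∏ i ∈ t \ s, f i :=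
    calc ∏ i ∈ s \ t, f i
        ≤ ∏ _i ∈ s \ t, c := prod_le_prod (fun i hi => hf i (mem_sdiff.1 hi).1) hs
      _ = ∏ _i ∈ t \ s, c := by rw [prod_const, prod_const, hcard]
      _ ≤ ∏ i ∈ t \ s, f i := prod_le_prod (fun _ _ => hc) ht
  calc ∏ i ∈ s, f i
      = (∏ i ∈ s ∩ t, f i) * ∏ i ∈ s \ t, f i := (prod_inter_mul_prod_sdiff s t f).symm
    _ ≤ (∏ i ∈ t ∩ s, f i) * ∏ i ∈ t \ s, f i := by
        rw [inter_comm]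
        exact mul_le_mul_of_nonneg_left hdiff
          (prod_nonneg fun i hi => hf i (mem_inter.1 hi).2)
    _ = ∏ i ∈ t, f i := prod_inter_mul_prod_sdiff t s f

variable [LinearOrder ι] [LocallyFiniteOrderTop ι]

theorem prod_le_prod_Ioi_of_monotone [CommMonoidWithZero R] [Preorder R] [ZeroLEOneClass R]
    [PosMulMono R] {f : ι → R} (hf0 : ∀ i, 0 ≤ f i) (hf : Monotone f)
    {s : Finset ι} {i : ι} (hs : #s = #(Ioi i)) : ∏ j ∈ s, f j ≤ ∏ j ∈ Ioi i, f j := by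
  classical
  refine prod_le_prod_of_card_eq (fun j _ => hf0 j) (hf0 i) hs (fun j hj => hf ?_)
    fun j hj => hf (mem_Ioi.1 (mem_sdiff.1 hj).1).le
  exact not_lt.1 fun h => (mem_sdiff.1 hj).2 (mem_Ioi.2 h)

theorem exists_mem_lt_of_card_eq_card_Ici {s : Finset ι} {i : ι} (hs : #s = #(Ici i))
    (hne : s ≠ Ici i) : ∃ j ∈ s, j < i := by
  have hsub : ¬ s ⊆ Ici i := fun h => hne (eq_of_subset_of_card_le h hs.ge)
  obtain ⟨j, hjs, hji⟩ := not_subset.1 hsub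
  exact ⟨j, hjs, not_le.1 fun h => hji (mem_Ici.2 h)⟩

theorem prod_le_mul_prod_Ioi_of_ne_Ici {f : ι → ℝ} (hf0 : ∀ i, 0 ≤ f i) (hf : Monotone f)
    {i : ι} {M : ℝ} (hM : ∀ j < i, f j ≤ M) {s : Finset ι} (hs : #s = #(Ici i))
    (hne : s ≠ Ici i) : ∏ j ∈ s, f j ≤ M * ∏ j ∈ Ioi i, f j := by
  classical
  obtain ⟨j, hjs, hji⟩ := exists_mem_lt_of_card_eq_card_Ici hs hne
  have hcard : #(s.erase j) = #(Ioi i) := by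
    rw [card_erase_of_mem hjs, hs, card_Ioi_eq_card_Ici_sub_one]
  rw [← mul_prod_erase s f hjs]
  exact mul_le_mul (hM j hji) (prod_le_prod_Ioi_of_monotone hf0 hf hcard)
    (prod_nonneg fun _ _ => hf0 _) ((hf0 j).trans (hM j hji))

end Finset

section

variable {ι 𝕜 : Type*} [LinearOrder ι] [Fintype ι] [LocallyFiniteOrderTop ι]
  [NormedField 𝕜] {a : ι → 𝕜} {i : ι} {M : ℝ}

theorem sub_mul_prod_Ioi_le_norm_esymm (ha : Monotone fun j => ‖a j‖)
    (hM : ∀ j < i, ‖a j‖ ≤ M) (hM0 : 0 ≤ M) :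
    (‖a i‖ - (Fintype.card ι).choose #(Ici i) * M) * ∏ j ∈ Ioi i, ‖a j‖ ≤
      ‖(univ.val.map a).esymm #(Ici i)‖ := by
  classical
  set C : ℝ := (Fintype.card ι).choose #(Ici i)
  set Q := ∏ j ∈ Ioi i, ‖a j‖
  set S := powersetCard #(Ici i) (univ : Finset ι)
  set B := ∑ s ∈ S.erase (Ici i), ∏ j ∈ s, a j
  have hsplit : (univ.val.map a).esymm #(Ici i) = ∏ j ∈ Ici i, a j + B := by
    rw [esymm_map_val, ← add_sum_erase S _ (mem_powersetCard.2 ⟨subset_univ _, rfl⟩)]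
  have htop : ‖∏ j ∈ Ici i, a j‖ = ‖a i‖ * Q := by
    rw [norm_prod, ← Ioi_insert, prod_insert notMem_Ioi_self]
  have hrest : ‖B‖ ≤ C * M * Q :=
    calc ‖B‖
        ≤ ∑ s ∈ S.erase (Ici i), ‖∏ j ∈ s, a j‖ := norm_sum_le _ _
      _ ≤ ∑ _s ∈ S.erase (Ici i), M * Q := by
          refine sum_le_sum fun s hs => ?_
          rw [norm_prod]
          exact prod_le_mul_prod_Ioi_of_ne_Ici (fun _ => norm_nonneg _) ha hM
            (mem_powersetCard.1 (mem_of_mem_erase hs)).2 (ne_of_mem_erase hs)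
      _ ≤ #S * (M * Q) := by
          rw [sum_const, nsmul_eq_mul]
          exact mul_le_mul_of_nonneg_right (by exact_mod_cast card_erase_le)
            (mul_nonneg hM0 (prod_nonneg fun _ _ => norm_nonneg _))
      _ = C * M * Q := by
          rw [card_powersetCard, card_univ, mul_assoc]
  rw [hsplit]
  calc (‖a i‖ - C * M) * Q
      ≤ ‖∏ j ∈ Ici i, a j‖ - ‖B‖ := by
        rw [htop]; linarith
    _ ≤ ‖∏ j ∈ Ici i, a j + B‖ := by
        simpa using norm_sub_norm_le (∏ j ∈ Ici i, a j) (-B)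

theorem sub_le_norm_esymm (ha : Monotone fun j => ‖a j‖)
    (hM : ∀ j < i, ‖a j‖ ≤ M) (hM0 : 0 ≤ M) (hi : 1 ≤ ‖a i‖) :
    ‖a i‖ - (Fintype.card ι).choose #(Ici i) * M ≤
      ‖(univ.val.map a).esymm #(Ici i)‖ := by
  have hQ : 1 ≤ ∏ j ∈ Ioi i, ‖a j‖ :=
    one_le_prod fun j hj => hi.trans (ha (mem_Ioi.1 hj).le)
  rcases le_total (‖a i‖ - (Fintype.card ι).choose #(Ici i) * M) 0 with hneg | hpos
  · exact hneg.trans (norm_nonneg _)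
  · exact (le_mul_of_one_le_right hpos hQ).trans (sub_mul_prod_Ioi_le_norm_esymm ha hM hM0)

end

theorem stmt11_general (N b : ℕ) (hb : b < N) (α : ℕ → Fin N → ℂ)
    (hord : ∀ m : ℕ, ∀ j l : Fin N, j ≤ l → ‖α m j‖ ≤ ‖α m l‖)
    (M : ℝ) (hM : 0 < M)
    (hbdd : ∀ m : ℕ, ∀ j : Fin N, (j : ℕ) < b → ‖α m j‖ ≤ M)
    (hdiv : Tendsto (fun m => ‖α m ⟨b, hb⟩‖) atTop atTop) :
    Tendsto
      (fun m =>
        ‖(Multiset.map (α m) (Finset.univ : Finset (Fin N)).val).esymm (N - b)‖)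
      atTop atTop := by
  have hcard : #(Ici (⟨b, hb⟩ : Fin N)) = N - b := Fin.card_Ici _
  refine tendsto_atTop_mono' atTop ?_
    (tendsto_atTop_add_const_right _ (-(N.choose (N - b) * M)) hdiv)
  filter_upwards [hdiv.eventually_ge_atTop 1] with m hm
  have := sub_le_norm_esymm (hord m) (hbdd m) hM.le hm
  rwa [hcard, Fintype.card_fin, sub_eq_add_neg] at this

theorem stmt11 (N b : ℕ) (hN : 1 ≤ N) (hb : b < N) (α : ℕ → Fin N → ℂ)
    (hord : ∀ m : ℕ, ∀ j l : Fin N, j ≤ l → ‖α m j‖ ≤ ‖α m l‖)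
    (M : ℝ) (hM : 0 < M)
    (hbdd : ∀ m : ℕ, ∀ j : Fin N, (j : ℕ) < b → ‖α m j‖ ≤ M)
    (hdiv : Tendsto (fun m => ‖α m ⟨b, hb⟩‖) atTop atTop) :
    Tendsto
      (fun m =>
        ‖(Multiset.map (α m) (Finset.univ : Finset (Fin N)).val).esymm (N - b)‖)
      atTop atTop :=
  stmt11_general N b hb α hord M hM hbdd hdiv
end
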